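/- arXiv:1407.5884 — 10 statements merged into one kernel-verified Lean document; each statement's English description precedes it below -/
import Mathlib

section
/- Let (t_m) and (ℓ_m) be sequences of positive integers with ℓ_m → ∞ and t_m/ℓ_m^{1/5} → 0 as m → ∞. Write t = t_m, ℓ = ℓ_m. Then the variance of the number of empty boxes when ℓ balls are placed uniformly and independently into tℓ boxes, namely 𝕍(Y) = (tℓ)(tℓ−1)(1 − 2/(tℓ))^ℓ + tℓ(1 − 1/(tℓ))^ℓ − (tℓ)^2 (1 − 1/(tℓ))^{2ℓ}, satisfies 𝕍(Y) / (t e^{−2/t}(e^{1/t} − 1 − 1/t) ℓ) → 1 as m → ∞. -/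
/-!
Write `n = tℓ`, `p = 1 - 1/n`, `a = 1 - 2/n`. Then `𝕍(Y) = n pˡ - n aˡ - n² ((p²)ˡ - aˡ)` and the
approximation `t e^{-2/t} (e^{1/t} - 1 - 1/t) ℓ` equals `n (e^{-1/t} - e^{-2/t}) - ℓ e^{-2/t}`. Since `(1 - c/n)ˡ = e^{-c/t} + O(1/(tn))`,
the first two terms match up to `O(1/t)`; since `p² - a = 1/n²`, the mean value bound for `x ↦ xˡ`
gives `n² ((p²)ˡ - aˡ) = ℓ e^{-2/t} + O(1/t)`. So `𝕍(Y)` differs from the approximation by `O(1/t)`,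
while `e^x - 1 - x ≥ x²/2` makes the approximation at least `ℓ/(16t)`; the ratio is `1 + O(1/ℓ)`,
uniformly in `t ≥ 1`.
-/

open Real Finset Filter

theorem pow_sub_pow_mem_Icc {R : Type*} [CommRing R] [PartialOrder R] [IsOrderedRing R]
    {a b : R} (ha : 0 ≤ a) (hab : a ≤ b) (n : ℕ) :
    b ^ n - a ^ n ∈ Set.Icc (n * a ^ (n - 1) * (b - a)) (n * b ^ (n - 1) * (b - a)) := by
  have hb : 0 ≤ b := ha.trans hab
  have hba : 0 ≤ b - a := sub_nonneg.2 hab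
  rw [← geom_sum₂_mul]
  have hterm : ∀ i ∈ range n, a ^ (n - 1) ≤ b ^ i * a ^ (n - 1 - i) ∧
      b ^ i * a ^ (n - 1 - i) ≤ b ^ (n - 1) := by
    intro i hi
    have hi : i ≤ n - 1 := by rw [mem_range] at hi; omega
    constructor
    · calc a ^ (n - 1) = a ^ i * a ^ (n - 1 - i) := by rw [← pow_add, Nat.add_sub_cancel' hi]
        _ ≤ b ^ i * a ^ (n - 1 - i) := by gcongr
    · calc b ^ i * a ^ (n - 1 - i) ≤ b ^ i * b ^ (n - 1 - i) := by gcongr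
        _ = b ^ (n - 1) := by rw [← pow_add, Nat.add_sub_cancel' hi]
  constructor
  · gcongr
    simpa using card_nsmul_le_sum _ _ _ fun i hi => (hterm i hi).1
  · gcongr
    simpa using sum_le_card_nsmul _ _ _ fun i hi => (hterm i hi).2

theorem exp_neg_add_two_mul_sq_le_one_sub {x : ℝ} (hx : x ≤ 1 / 2) :
    exp (-(x + 2 * x ^ 2)) ≤ 1 - x := by
  rw [exp_neg, inv_le_comm₀ (exp_pos _) (by linarith)]
  calc (1 - x)⁻¹ ≤ x + 2 * x ^ 2 + 1 := by
        -- `(1 - x) (1 + x + 2x²) = 1 + x² (1 - 2x)`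
        rw [inv_le_iff_one_le_mul₀ (by linarith)]; nlinarith
    _ ≤ exp (x + 2 * x ^ 2) := add_one_le_exp _

theorem exp_neg_sub_le_one_sub_div_pow {n : ℕ} {t : ℝ} (ht : 0 ≤ t) (htn : 2 * t ≤ n) :
    exp (-t) - 2 * t ^ 2 / n ≤ (1 - t / n) ^ n := by
  rcases n.eq_zero_or_pos with rfl | hn
  · obtain rfl : t = 0 := by push_cast at htn; linarith
    simp
  have hn : (0 : ℝ) < n := by exact_mod_cast hn
  calc exp (-t) - 2 * t ^ 2 / n ≤ exp (-t) * exp (-(2 * t ^ 2 / n)) := by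
        have hs : 0 ≤ 2 * t ^ 2 / n := by positivity
        nlinarith [add_one_le_exp (-(2 * t ^ 2 / n)), exp_le_one_iff.2 (neg_nonpos.2 ht),
          exp_pos (-t)]
    _ = exp (-(t / n + 2 * (t / n) ^ 2)) ^ n := by
        rw [← exp_add, ← exp_nat_mul]; congr 1; field_simp; ring
    _ ≤ (1 - t / n) ^ n := by
        gcongr
        exact exp_neg_add_two_mul_sq_le_one_sub (by rw [div_le_iff₀ hn]; linarith)

theorem mul_one_sub_div_pow_sub_exp_neg_mem_Icc {T c : ℝ} {l : ℕ} (hT : 0 < T) (hc : 0 < c)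
    (hcl : 2 * c ≤ T * l) :
    T * l * ((1 - c / (T * l)) ^ l - exp (-(c / T))) ∈ Set.Icc (-(2 * c ^ 2 / T)) 0 := by
  have hn : 0 < T * l := by linarith
  have hcl' : 2 * (c / T) ≤ l := by rw [← mul_div_assoc, div_le_iff₀ hT]; linarith
  rw [← div_div]
  constructor
  · have h := mul_le_mul_of_nonneg_left
      (exp_neg_sub_le_one_sub_div_pow (by positivity) hcl') hn.le
    have e : T * l * (2 * (c / T) ^ 2 / l) = 2 * c ^ 2 / T := by
      field_simp [(pos_of_mul_pos_right hn hT.le).ne']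
    linear_combination h + e
  · have h := one_sub_div_pow_le_exp_neg (by linarith [div_pos hc hT] : c / T ≤ l)
    exact mul_nonpos_of_nonneg_of_nonpos hn.le (by linarith)

theorem sq_mul_one_sub_div_pow_sub_mem_Icc {n : ℝ} (hn : 2 ≤ n) (l : ℕ) :
    n ^ 2 * ((1 - 1 / n) ^ (2 * l) - (1 - 2 / n) ^ l) ∈
      Set.Icc (l * (1 - 2 / n) ^ l) (l * (1 - 1 / n) ^ (2 * l) + 2 * l / n) := by
  rcases l.eq_zero_or_pos with rfl | hl
  · simp
  have hn0 : 0 < n := by linarith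
  set a := 1 - 2 / n
  set b := (1 - 1 / n) ^ 2
  have ha : 0 ≤ a := sub_nonneg.2 ((div_le_one hn0).2 hn)
  have hba : b - a = 1 / n ^ 2 := by simp only [a, b]; field_simp; ring
  have hab : a ≤ b := sub_nonneg.1 (hba ▸ by positivity)
  have hb : 0 ≤ b := by positivity
  have hb1 : b ≤ 1 :=
    pow_le_one₀ (sub_nonneg.2 ((div_le_one hn0).2 (by linarith))) (by linarith [one_div_pos.2 hn0])
  have h1b : 1 - b ≤ 2 / n := by simp only [b]; nlinarith [sq_nonneg (1 / n)]
  have hn2 : n ^ 2 * (b - a) = 1 := by rw [hba]; field_simp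
  obtain ⟨hlow, hupp⟩ := pow_sub_pow_mem_Icc ha hab l
  obtain ⟨k, rfl⟩ : ∃ k, l = k + 1 := ⟨l - 1, by omega⟩
  simp only [Nat.add_sub_cancel] at hlow hupp
  rw [pow_mul]
  constructor
  · calc ((k + 1 : ℕ) : ℝ) * a ^ (k + 1) ≤ (k + 1 : ℕ) * a ^ k := by
          gcongr ?_ * ?_
          exact pow_le_pow_of_le_one ha (by linarith [div_pos two_pos hn0]) k.le_succ
      _ = n ^ 2 * ((k + 1 : ℕ) * a ^ k * (b - a)) := by
          linear_combination (↑(k + 1) * a ^ k) * hn2.symm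
      _ ≤ n ^ 2 * (b ^ (k + 1) - a ^ (k + 1)) := by gcongr
  · calc n ^ 2 * (b ^ (k + 1) - a ^ (k + 1)) ≤ n ^ 2 * ((k + 1 : ℕ) * b ^ k * (b - a)) := by
          gcongr
      _ = (k + 1 : ℕ) * b ^ (k + 1) + (k + 1 : ℕ) * (b ^ k * (1 - b)) := by
          linear_combination (↑(k + 1) * b ^ k) * hn2
      _ ≤ (k + 1 : ℕ) * b ^ (k + 1) + (k + 1 : ℕ) * (2 / n) := by
          gcongr
          calc b ^ k * (1 - b) ≤ 1 * (1 - b) :=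
                mul_le_mul_of_nonneg_right (pow_le_one₀ hb hb1) (by linarith)
            _ ≤ 2 / n := by linarith
      _ = _ := by ring

theorem one_div_eight_le_exp_neg_two_div {T : ℝ} (hT : 1 ≤ T) : 1 / 8 ≤ exp (-2 / T) :=
  calc (1 : ℝ) / 8 ≤ exp (-1) ^ 2 := by nlinarith [exp_neg_one_gt_d9]
    _ = exp (-2) := by rw [← exp_nat_mul]; norm_num
    _ ≤ exp (-2 / T) := by
        gcongr
        rw [le_div_iff₀ (by linarith)]; linarith

theorem abs_div_sub_one_le {x y c ε : ℝ} (hc : 0 < c) (hcy : c ≤ y) (h : |x - y| ≤ ε) :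
    |x / y - 1| ≤ ε / c := by
  have hy : 0 < y := hc.trans_le hcy
  rw [div_sub_one hy.ne', abs_div, abs_of_pos hy]
  calc |x - y| / y ≤ ε / y := by gcongr
    _ ≤ ε / c := div_le_div_of_nonneg_left ((abs_nonneg _).trans h) hc hcy

noncomputable def emptyBoxesVariance (n : ℝ) (l : ℕ) : ℝ :=
  n * (n - 1) * (1 - 2 / n) ^ l + n * (1 - 1 / n) ^ l - n ^ 2 * (1 - 1 / n) ^ (2 * l)

noncomputable def emptyBoxesVarianceApprox (T : ℝ) (l : ℕ) : ℝ :=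
  T * exp (-2 / T) * (exp (1 / T) - 1 - 1 / T) * l

theorem emptyBoxesVariance_eq (n : ℝ) (l : ℕ) :
    emptyBoxesVariance n l = n * (1 - 1 / n) ^ l - n * (1 - 2 / n) ^ l
      - n ^ 2 * ((1 - 1 / n) ^ (2 * l) - (1 - 2 / n) ^ l) := by
  unfold emptyBoxesVariance; ring

theorem emptyBoxesVarianceApprox_eq {T : ℝ} (hT : T ≠ 0) (l : ℕ) :
    emptyBoxesVarianceApprox T l =
      T * l * (exp (-(1 / T)) - exp (-(2 / T))) - l * exp (-(2 / T)) := by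
  have h : exp (-(2 / T)) * exp (1 / T) = exp (-(1 / T)) := by rw [← exp_add]; congr 1; ring
  unfold emptyBoxesVarianceApprox
  rw [neg_div]
  field_simp
  linear_combination (T * l) * h

theorem div_le_emptyBoxesVarianceApprox {T : ℝ} (hT : 1 ≤ T) (l : ℕ) :
    l / (16 * T) ≤ emptyBoxesVarianceApprox T l := by
  have hT0 : 0 < T := by linarith
  have hq : 1 / (2 * T ^ 2) ≤ exp (1 / T) - 1 - 1 / T := by
    have := quadratic_le_exp_of_nonneg (one_div_pos.2 hT0).le
    field_simp at this ⊢; linarith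
  calc (l : ℝ) / (16 * T) = T * (1 / 8) * (1 / (2 * T ^ 2)) * l := by field_simp; ring
    _ ≤ _ := by unfold emptyBoxesVarianceApprox; gcongr; exact one_div_eight_le_exp_neg_two_div hT

theorem abs_emptyBoxesVariance_div_emptyBoxesVarianceApprox_sub_one_le {T : ℝ} (hT : 1 ≤ T)
    {l : ℕ} (hl : 4 ≤ l) :
    |emptyBoxesVariance (T * l) l / emptyBoxesVarianceApprox T l - 1| ≤ 256 / l := by
  have hT0 : 0 < T := by linarith
  have hl0 : (4 : ℝ) ≤ l := by exact_mod_cast hl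
  have hn : 4 ≤ T * l := by nlinarith
  obtain ⟨hP₁, hP₂⟩ :=
    mul_one_sub_div_pow_sub_exp_neg_mem_Icc hT0 one_pos (by linarith : 2 * 1 ≤ T * l)
  obtain ⟨hA₁, hA₂⟩ :=
    mul_one_sub_div_pow_sub_exp_neg_mem_Icc hT0 two_pos (by linarith : 2 * 2 ≤ T * l)
  obtain ⟨hC₁, hC₂⟩ := sq_mul_one_sub_div_pow_sub_mem_Icc (by linarith : 2 ≤ T * l) l
  have hdiff : |emptyBoxesVariance (T * l) l - emptyBoxesVarianceApprox T l| ≤ 16 / T := by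
    rw [emptyBoxesVariance_eq, emptyBoxesVarianceApprox_eq hT0.ne']
    set P := (1 - 1 / (T * l)) ^ l
    set A := (1 - 2 / (T * l)) ^ l
    set E₁ := exp (-(1 / T))
    set E₂ := exp (-(2 / T))
    have hA : l * (E₂ - A) ≤ 8 / T := by
      have hAE : A ≤ E₂ := sub_nonpos.1 (nonpos_of_mul_nonpos_right hA₂ (by linarith))
      calc l * (E₂ - A) ≤ T * (l * (E₂ - A)) :=
            le_mul_of_one_le_left (mul_nonneg l.cast_nonneg (sub_nonneg.2 hAE)) hT
        _ ≤ 8 / T := by linear_combination hA₁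
    have hB : l * (1 - 1 / (T * l)) ^ (2 * l) ≤ l * E₂ := by
      have hPE : P ≤ E₁ := sub_nonpos.1 (nonpos_of_mul_nonpos_right hP₂ (by linarith))
      have hE : E₁ ^ 2 = E₂ := by simp only [E₁, E₂, ← exp_nat_mul]; congr 1; ring
      have hP0 : 0 ≤ P := pow_nonneg (sub_nonneg.2 ((div_le_one (by linarith)).2 (by linarith))) l
      rw [pow_mul', ← hE]
      gcongr
    have h2l : 2 * l / (T * l) = 2 / T := by field_simp
    have hT' : 0 < 1 / T := by positivity
    rw [h2l] at hC₂
    rw [abs_le]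
    constructor
    · linear_combination hP₁ + hA₂ + hC₂ + hB + 12 * hT'
    · linear_combination hP₂ + hA₁ + hC₁ + hA
  calc _ ≤ (16 / T) / (l / (16 * T)) :=
        abs_div_sub_one_le (by positivity) (div_le_emptyBoxesVarianceApprox hT l) hdiff
    _ = 256 / l := by field_simp; ring

theorem variance_empty_boxes_asymptotic_general (t l : ℕ → ℕ) (ht : ∀ m, 0 < t m)
    (hltop : Filter.Tendsto l Filter.atTop Filter.atTop) :
    Filter.Tendsto
      (fun m =>
        (((t m : ℝ) * (l m : ℝ)) * ((t m : ℝ) * (l m : ℝ) - 1) *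
            (1 - 2 / ((t m : ℝ) * (l m : ℝ))) ^ (l m)
          + (t m : ℝ) * (l m : ℝ) * (1 - 1 / ((t m : ℝ) * (l m : ℝ))) ^ (l m)
          - ((t m : ℝ) * (l m : ℝ)) ^ 2 * (1 - 1 / ((t m : ℝ) * (l m : ℝ))) ^ (2 * l m)) /
          ((t m : ℝ) * Real.exp (-2 / (t m : ℝ)) *
            (Real.exp (1 / (t m : ℝ)) - 1 - 1 / (t m : ℝ)) * (l m : ℝ)))
      Filter.atTop (nhds 1) := by
  change Tendsto (fun m => emptyBoxesVariance (t m * l m) (l m) /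
    emptyBoxesVarianceApprox (t m) (l m)) atTop (nhds 1)
  rw [tendsto_iff_norm_sub_tendsto_zero]
  refine squeeze_zero_norm' ?_ ((tendsto_natCast_atTop_atTop.comp hltop).const_div_atTop 256)
  filter_upwards [hltop.eventually_ge_atTop 4] with m hm
  rw [norm_norm]
  exact abs_emptyBoxesVariance_div_emptyBoxesVarianceApprox_sub_one_le (by exact_mod_cast ht m) hm

/-- Asymptotics of the variance of the number of empty boxes: if `ℓ_m → ∞` and
`t_m/ℓ_m^{1/5} → 0`, then
`𝕍(Y) = (tℓ)(tℓ-1)(1-2/(tℓ))^ℓ + tℓ(1-1/(tℓ))^ℓ - (tℓ)²(1-1/(tℓ))^{2ℓ}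
      ∼ t e^{-2/t}(e^{1/t} - 1 - 1/t) ℓ`. -/
theorem variance_empty_boxes_asymptotic (t l : ℕ → ℕ) (ht : ∀ m, 0 < t m) (hl : ∀ m, 0 < l m)
    (hltop : Filter.Tendsto l Filter.atTop Filter.atTop)
    (hts : Filter.Tendsto (fun m => (t m : ℝ) / (l m : ℝ) ^ ((1 : ℝ) / 5))
      Filter.atTop (nhds 0)) :
    Filter.Tendsto
      (fun m =>
        (((t m : ℝ) * (l m : ℝ)) * ((t m : ℝ) * (l m : ℝ) - 1) *
            (1 - 2 / ((t m : ℝ) * (l m : ℝ))) ^ (l m)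
          + (t m : ℝ) * (l m : ℝ) * (1 - 1 / ((t m : ℝ) * (l m : ℝ))) ^ (l m)
          - ((t m : ℝ) * (l m : ℝ)) ^ 2 * (1 - 1 / ((t m : ℝ) * (l m : ℝ))) ^ (2 * l m)) /
          ((t m : ℝ) * Real.exp (-2 / (t m : ℝ)) *
            (Real.exp (1 / (t m : ℝ)) - 1 - 1 / (t m : ℝ)) * (l m : ℝ)))
      Filter.atTop (nhds 1) :=
  variance_empty_boxes_asymptotic_general t l ht hltop
end

section
/- Let (n_m) be a sequence of positive integers tending to infinity and (h_m) a sequence of positive integers with h_m^2/n_m → 0 (in particular, for fixed h this covers h_m = h). Let X_{n_m} be the image size of a uniformly random function from an n_m-element set to itself. Then ℙ(X_{n_m} = h_m) / [ (1/h_m!) n_m^{h_m} (h_m/n_m)^{n_m} ] → 1 as m → ∞. -/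
/-!
A function `[n] → [n]` with image of size `k` is a choice of a `k`-subset followed by a surjection
onto it, so the normalized probability in question factors as
`(n.descFactorial k / n ^ k) * (#surjections [n] → [k] / k ^ n)`.
The first factor is at least `1 - k² / n` by Bernoulli's inequality. A non-surjective map misses
some value, so the second factor is at least `1 - k (1 - 1/k) ^ n ≥ 1 - k e^{-n/k}`, and once
`k² ≤ n` this error is at most `√n e^{-√n}`. Both factors are at most `1`, so both tend to `1`.
-/

open Finset Function Filter Topology Real

section Counting

variable {α β γ : Type*}

lemma natCard_surjective_congr (e : β ≃ γ) :
    Nat.card {f : α → β // Surjective f} = Nat.card {f : α → γ // Surjective f} :=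
  Nat.card_congr <| (Equiv.arrowCongr (Equiv.refl α) e).subtypeEquiv fun f => by
    simp [Equiv.arrowCongr]

lemma natCard_range_eq_natCard_surjective (S : Set β) :
    Nat.card {f : α → β // Set.range f = S} = Nat.card {g : α → S // Surjective g} :=
  Nat.card_congr
    { toFun := fun f => ⟨S.codRestrict f.1 fun a => f.2.subset (Set.mem_range_self a), by
        rintro ⟨b, hb⟩
        obtain ⟨a, rfl⟩ : b ∈ Set.range f.1 := by rwa [f.2]
        exact ⟨a, rfl⟩⟩
      invFun := fun g => ⟨Subtype.val ∘ g.1, by rw [Set.range_comp, g.2.range_eq]; simp⟩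
      left_inv := fun _ => rfl
      right_inv := fun _ => rfl }

variable [Fintype α] [DecidableEq α] [Fintype β] [DecidableEq β]

lemma card_filter_image_eq_natCard_surjective (S : Finset β) :
    #{f : α → β | univ.image f = S} = Nat.card {g : α → Fin #S // Surjective g} :=
  calc #{f : α → β | univ.image f = S}
      = Nat.card {f : α → β // Set.range f = S} := by
        rw [Nat.card_eq_fintype_card, Fintype.card_subtype]
        simp_rw [← coe_inj, coe_image, coe_univ, Set.image_univ]
    _ = Nat.card {g : α → S // Surjective g} := natCard_range_eq_natCard_surjective _
    _ = _ := natCard_surjective_congr S.equivFin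

lemma card_filter_card_image_eq_choose_mul (k : ℕ) :
    #{f : α → β | #(univ.image f) = k} =
      (Fintype.card β).choose k * Nat.card {g : α → Fin k // Surjective g} := by
  have hmaps : ∀ f ∈ ({f : α → β | #(univ.image f) = k} : Finset _),
      univ.image f ∈ powersetCard k univ :=
    fun f hf => mem_powersetCard_univ.2 (mem_filter.1 hf).2
  rw [card_eq_sum_card_fiberwise hmaps, ← card_univ, ← card_powersetCard, ← smul_eq_mul,
    ← sum_const]
  refine sum_congr rfl fun S hS => ?_
  obtain rfl := mem_powersetCard_univ.1 hS
  rw [filter_filter, ← card_filter_image_eq_natCard_surjective]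
  congr 1
  ext f
  simp only [mem_filter, mem_univ, true_and, and_iff_right_iff_imp]
  rintro rfl
  rfl

end Counting

section Surjections

open Fintype

variable {α β : Type*} [Fintype α] [DecidableEq α] [Fintype β] [DecidableEq β]

lemma natCard_surjective_le : Nat.card {f : α → β // Surjective f} ≤ card β ^ card α := by
  simpa using Finite.card_subtype_le (α := α → β) Surjective

lemma card_filter_not_surjective_le :
    #{f : α → β | ¬ Surjective f} ≤ card β * (card β - 1) ^ card α := by
  have hmiss : ({f : α → β | ¬ Surjective f} : Finset _) ⊆
      univ.biUnion fun b => piFinset fun _ => univ.erase b := by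
    intro f hf
    obtain ⟨b, hb⟩ := not_forall.1 (mem_filter.1 hf).2
    simpa [mem_piFinset] using ⟨b, fun a hab => hb ⟨a, hab⟩⟩
  calc _ ≤ _ := card_le_card hmiss
    _ ≤ _ := card_biUnion_le
    _ = _ := by simp [card_piFinset]

lemma card_pow_le_natCard_surjective_add :
    card β ^ card α ≤ Nat.card {f : α → β // Surjective f} + card β * (card β - 1) ^ card α := by
  rw [Nat.card_eq_fintype_card, Fintype.card_subtype, ← card_fun, ← Finset.card_univ,
    ← card_filter_add_card_filter_not (p := Surjective)]
  exact Nat.add_le_add_left card_filter_not_surjective_le _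

lemma natCard_surjective_div_pow_le_one :
    (Nat.card {f : α → β // Surjective f} : ℝ) / card β ^ card α ≤ 1 :=
  div_le_one_of_le₀ (by exact_mod_cast natCard_surjective_le) (by positivity)

lemma one_sub_mul_pow_le_natCard_surjective_div_pow [Nonempty β] :
    1 - card β * (1 - (card β : ℝ)⁻¹) ^ card α ≤
      Nat.card {f : α → β // Surjective f} / card β ^ card α := by
  have hb : (0 : ℝ) < card β := by exact_mod_cast Fintype.card_pos
  have hcount : (card β : ℝ) ^ card α - card β * (card β - 1) ^ card α ≤
      Nat.card {f : α → β // Surjective f} := by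
    have := card_pow_le_natCard_surjective_add (α := α) (β := β)
    rw [← Nat.cast_le (α := ℝ)] at this
    push_cast [Nat.cast_sub Fintype.card_pos] at this
    linarith
  calc _ = ((card β : ℝ) ^ card α - card β * (card β - 1) ^ card α) / card β ^ card α := by
        rw [inv_eq_one_div, one_sub_div hb.ne', div_pow]
        field_simp
    _ ≤ _ := by gcongr

end Surjections

lemma descFactorial_div_pow_le_one (n k : ℕ) : (n.descFactorial k : ℝ) / n ^ k ≤ 1 :=
  div_le_one_of_le₀ (by exact_mod_cast n.descFactorial_le_pow k) (by positivity)

lemma one_sub_sq_div_le_descFactorial_div_pow {n k : ℕ} (hkn : k ≤ n) :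
    1 - (k : ℝ) ^ 2 / n ≤ n.descFactorial k / n ^ k := by
  rcases Nat.eq_zero_or_pos n with rfl | hn
  · simp [Nat.le_zero.1 hkn]
  have hn' : (0 : ℝ) < n := by exact_mod_cast hn
  have hkn' : (k : ℝ) / n ≤ 1 := div_le_one_of_le₀ (by exact_mod_cast hkn) hn'.le
  have hpow : (n - k) ^ k ≤ n.descFactorial k :=
    (Nat.pow_le_pow_left (by omega) k).trans (n.pow_sub_le_descFactorial k)
  calc 1 - (k : ℝ) ^ 2 / n = 1 + k * -(k / n) := by ring
    _ ≤ (1 + -(k / n)) ^ k := one_add_mul_le_pow (by linarith) k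
    _ = ((n - k : ℕ) : ℝ) ^ k / n ^ k := by
        rw [Nat.cast_sub hkn, ← div_pow]
        congr 1
        field_simp
        ring
    _ ≤ n.descFactorial k / n ^ k := by gcongr; exact_mod_cast hpow

lemma mul_one_sub_inv_pow_le_sqrt_mul_exp {k : ℝ} {n : ℕ} (hk : 1 ≤ k) (hkn : k ^ 2 ≤ n) :
    k * (1 - k⁻¹) ^ n ≤ √n * exp (-√n) := by
  have hk0 : 0 < k := by linarith
  have hbase : 0 ≤ 1 - k⁻¹ := sub_nonneg.2 (inv_le_one_of_one_le₀ hk)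
  have hk_sqrt : k ≤ √n := (le_sqrt hk0.le (Nat.cast_nonneg n)).2 hkn
  have hsqrt_le : √n ≤ n / k := by
    rw [le_div_iff₀ hk0]
    calc √n * k ≤ √n * √n := by gcongr
      _ = n := mul_self_sqrt (Nat.cast_nonneg n)
  have hexp : (1 - k⁻¹) ^ n ≤ exp (-(n / k)) :=
    calc (1 - k⁻¹) ^ n ≤ exp (-k⁻¹) ^ n := by gcongr; exact one_sub_le_exp_neg _
      _ = exp (-(n / k)) := by rw [← exp_nat_mul]; ring_nf
  calc k * (1 - k⁻¹) ^ n ≤ √n * exp (-(n / k)) := by gcongr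
    _ ≤ √n * exp (-√n) := by gcongr

lemma tendsto_sqrt_mul_exp_neg_sqrt : Tendsto (fun x => √x * exp (-√x)) atTop (𝓝 0) := by
  simpa [comp_def] using (tendsto_pow_mul_exp_neg_atTop_nhds_zero 1).comp tendsto_sqrt_atTop

lemma tendsto_nhds_one_of_one_sub_le_of_le_one {ι : Type*} {l : Filter ι} {f e : ι → ℝ}
    (he : Tendsto e l (𝓝 0)) (hlow : ∀ᶠ i in l, 1 - e i ≤ f i) (hup : ∀ᶠ i in l, f i ≤ 1) :
    Tendsto f l (𝓝 1) :=
  tendsto_of_tendsto_of_tendsto_of_le_of_le' (by simpa using tendsto_const_nhds.sub he)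
    tendsto_const_nhds hlow hup

lemma card_filter_card_image_div_eq {n k : ℕ} (hn : n ≠ 0) (hk : k ≠ 0) :
    ((#{f : Fin n → Fin n | #(univ.image f) = k} : ℝ) / n ^ n) /
        (1 / k.factorial * n ^ k * (k / n) ^ n) =
      n.descFactorial k / n ^ k * (Nat.card {g : Fin n → Fin k // Surjective g} / k ^ n) := by
  rw [card_filter_card_image_eq_choose_mul, Nat.descFactorial_eq_factorial_mul_choose]
  simp only [Fintype.card_fin, div_pow]
  push_cast
  field_simp

/-- Asymptotics for small image sizes: if `n_m → ∞` and `h_m² / n_m → 0`, then the probability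
that a uniformly random function from an `n_m`-element set to itself has image size exactly
`h_m` is asymptotic to `(1/h_m!) n_m^{h_m} (h_m/n_m)^{n_m}`. -/
theorem image_size_small_asymptotic (n h : ℕ → ℕ) (hh : ∀ m, 0 < h m)
    (hn : Filter.Tendsto n Filter.atTop Filter.atTop)
    (hh2 : Filter.Tendsto (fun m => (h m : ℝ) ^ 2 / (n m : ℝ)) Filter.atTop (nhds 0)) :
    Filter.Tendsto
      (fun m =>
        (((Finset.univ.filter (fun f : Fin (n m) → Fin (n m) =>
              (Finset.univ.image f).card = h m)).card : ℝ) / (n m : ℝ) ^ (n m)) /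
          ((1 / ((h m).factorial : ℝ)) * (n m : ℝ) ^ (h m) * ((h m : ℝ) / (n m : ℝ)) ^ (n m)))
      Filter.atTop (nhds 1) := by
  have hn0 : ∀ᶠ m in atTop, n m ≠ 0 := hn.eventually_ne_atTop 0
  have hsq : ∀ᶠ m in atTop, (h m : ℝ) ^ 2 ≤ n m := by
    filter_upwards [hn0, hh2.eventually (gt_mem_nhds one_pos)] with m hm hlt
    exact ((div_lt_one (by positivity)).1 hlt).le
  have hle : ∀ᶠ m in atTop, h m ≤ n m := hsq.mono fun m hm => by
    exact_mod_cast (le_self_pow₀ (by exact_mod_cast hh m) two_ne_zero).trans hm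
  have hfalling : Tendsto (fun m => ((n m).descFactorial (h m) : ℝ) / n m ^ h m) atTop (𝓝 1) :=
    tendsto_nhds_one_of_one_sub_le_of_le_one hh2
      (hle.mono fun m => one_sub_sq_div_le_descFactorial_div_pow)
      (Eventually.of_forall fun m => descFactorial_div_pow_le_one _ _)
  have herr : Tendsto (fun m => √(n m : ℝ) * exp (-√(n m : ℝ))) atTop (𝓝 0) :=
    tendsto_sqrt_mul_exp_neg_sqrt.comp (tendsto_natCast_atTop_atTop.comp hn)
  have hsurj : Tendsto (fun m => (Nat.card {g : Fin (n m) → Fin (h m) // Surjective g} : ℝ) /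
      h m ^ n m) atTop (𝓝 1) := by
    refine tendsto_nhds_one_of_one_sub_le_of_le_one herr ?_ (Eventually.of_forall fun m => ?_)
    · filter_upwards [hsq] with m hm
      have : Nonempty (Fin (h m)) := Fin.pos_iff_nonempty.1 (hh m)
      have hlow := one_sub_mul_pow_le_natCard_surjective_div_pow (α := Fin (n m)) (β := Fin (h m))
      rw [Fintype.card_fin, Fintype.card_fin] at hlow
      linarith [mul_one_sub_inv_pow_le_sqrt_mul_exp (by exact_mod_cast hh m) hm]
    · simpa using natCard_surjective_div_pow_le_one (α := Fin (n m)) (β := Fin (h m))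
  refine (mul_one (1 : ℝ) ▸ hfalling.mul hsurj).congr' ?_
  filter_upwards [hn0] with m hm
  exact (card_filter_card_image_div_eq hm (hh m).ne').symm
end

section
/- Let q be a prime power with q − 1 = ℓs, r a positive integer, t = gcd(r, s), and γ a fixed generator of 𝔽_q^*. Choose a_0, …, a_{ℓ−1} independently and uniformly at random from 𝔽_q, and let g = f^r_{a_0,…,a_{ℓ−1}} be the associated r-th order cyclotomic mapping of index ℓ. Let T_j = γ^j {x^{tℓ} : x ∈ 𝔽_q^*} for 0 ≤ j ≤ tℓ−1 be the cyclotomic cosets of index tℓ, and let Y be the number of indices j ∈ {0,…,tℓ−1} such that T_j is disjoint from the value set g(𝔽_q). Then for every integer k with 0 ≤ k ≤ tℓ, 𝔼((Y)_k) = (tℓ)_k (1 − sk/(tq))^ℓ, where (m)_k = m(m−1)⋯(m−k+1). -/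
/-!
Let `H = (𝔽_q^*)^{tℓ}`, so that `T_j = γ^j H`. Because `tℓ ∣ ℓr`, the `i`-th branch of `g` sends
`C_i` onto `a_i γ^{ir} (𝔽_q^*)^{ℓr} ⊆ a_i γ^{ir} H`; hence `g` misses `T_j` exactly when
`a_i ∉ γ^{j-ir} H` for every `i`. For fixed `i` these `tℓ` forbidden sets are disjoint and of size
`|H| = s/t`, so a fixed set of `k` cosets is missed by `(q - ks/t)^ℓ` of the `q^ℓ` choices of `a`.
Summing over the `k`-sets, which `(Y)_k / k!` counts, gives the formula.
-/

open Finset Function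
open scoped Nat

section Counting

variable {ι κ X R : Type*} [Fintype ι] [DecidableEq ι] [Fintype κ] [Fintype X] [CommRing R]
  {B : ι → κ → Finset X} {c : ℕ}

theorem card_pi_forall_notMem_eq [DecidableEq κ] [DecidableEq X]
    (hB : ∀ i, Pairwise (Disjoint on B i))
    (hc : ∀ i j, #(B i j) = c) (J : Finset κ) :
    (#{a : ι → X | ∀ j ∈ J, ∀ i, a i ∉ B i j} : R)
      = (Fintype.card X - #J * c) ^ Fintype.card ι := by
  have hunion : ∀ i, #(J.biUnion (B i)) = #J * c := fun i => by
    rw [card_biUnion fun j _ j' _ hjj' => hB i hjj', sum_const_nat fun j _ => hc i j]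
  have hpi : ({a : ι → X | ∀ j ∈ J, ∀ i, a i ∉ B i j} : Finset _)
      = Fintype.piFinset fun i => univ \ J.biUnion (B i) := by
    ext a
    simp only [mem_filter, mem_univ, true_and, Fintype.mem_piFinset, mem_sdiff, mem_biUnion,
      not_exists, not_and]
    exact ⟨fun h i j hj => h j hj i, fun h j hj i => h i j hj⟩
  have hfactor : ∀ i, (#(univ \ J.biUnion (B i)) : R) = Fintype.card X - #J * c := fun i => by
    rw [card_sdiff_of_subset (subset_univ _), card_univ,
      Nat.cast_sub (hunion i ▸ card_le_univ _), hunion i, Nat.cast_mul]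
  rw [hpi, Fintype.card_piFinset, Nat.cast_prod, Fintype.prod_congr _ _ hfactor, prod_const,
    card_univ]

theorem descFactorial_card_eq_factorial_mul_card_powersetCard {α : Type*} [DecidableEq α]
    [Fintype α] (p : α → Prop) [DecidablePred p] (k : ℕ) :
    (#{x | p x}).descFactorial k
      = k ! * #{J ∈ powersetCard k (univ : Finset α) | ∀ x ∈ J, p x} := by
  rw [Nat.descFactorial_eq_factorial_mul_choose, ← card_powersetCard]
  congr 2
  ext J
  simp [mem_powersetCard, subset_iff, and_comm]

theorem sum_descFactorial_natCard_forall_notMem (hB : ∀ i, Pairwise (Disjoint on B i))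
    (hc : ∀ i j, #(B i j) = c) (k : ℕ) :
    ∑ a : ι → X, ((Nat.card {j // ∀ i, a i ∉ B i j}).descFactorial k : R)
      = (Fintype.card κ).descFactorial k * (Fintype.card X - k * c) ^ Fintype.card ι := by
  classical
  simp_rw [Nat.card_eq_fintype_card, Fintype.card_subtype,
    descFactorial_card_eq_factorial_mul_card_powersetCard, card_filter]
  push_cast
  rw [← mul_sum, sum_comm, Nat.descFactorial_eq_factorial_mul_choose, Nat.cast_mul, mul_assoc]
  congr 1
  calc _ = ∑ J ∈ powersetCard k univ, (Fintype.card X - k * c : R) ^ Fintype.card ι := by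
        refine sum_congr rfl fun J hJ => ?_
        rw [← (mem_powersetCard.1 hJ).2, ← card_pi_forall_notMem_eq hB hc, natCast_card_filter]
    _ = _ := by rw [sum_const, card_powersetCard, card_univ, nsmul_eq_mul]

end Counting

section CyclicGroup

theorem exists_eq_pow_mul_pow_of_forall_mem_zpowers {M : Type*} [Group M] [Finite M] {γ : M}
    (hγ : ∀ x, x ∈ Subgroup.zpowers γ) {m : ℕ} (hm : m ≠ 0) (x : M) :
    ∃ (i : Fin m) (y : M), x = γ ^ (i : ℕ) * y ^ m := by
  obtain ⟨n, rfl⟩ := mem_powers_iff_mem_zpowers.2 (hγ x)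
  refine ⟨⟨n % m, Nat.mod_lt n (Nat.pos_of_ne_zero hm)⟩, γ ^ (n / m), ?_⟩
  rw [← pow_mul, ← pow_add, Fin.val_mk, Nat.mod_add_div']

variable {M : Type*} [CommGroup M] [Finite M] {γ : M} (hγ : ∀ x, x ∈ Subgroup.zpowers γ)
include hγ

theorem orderOf_mk_powMonoidHom_range {d : ℕ} (hd : d ∣ Nat.card M) :
    orderOf (γ : M ⧸ (powMonoidHom d : M →* M).range) = d := by
  have : IsCyclic M := ⟨γ, hγ⟩
  rw [orderOf_eq_card_of_forall_mem_zpowers, ← Subgroup.index_eq_card,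
    IsCyclic.index_powMonoidHom_range, Nat.gcd_eq_right hd]
  intro x
  obtain ⟨x, rfl⟩ := QuotientGroup.mk_surjective x
  obtain ⟨n, rfl⟩ := hγ x
  exact ⟨n, (QuotientGroup.mk_zpow _ _ _).symm⟩

theorem Fin.eq_of_pow_mul_pow_eq {d : ℕ} (hd : d ∣ Nat.card M) {j j' : Fin d} {y y' : M}
    (h : γ ^ (j : ℕ) * y ^ d = γ ^ (j' : ℕ) * y' ^ d) : j = j' := by
  set H := (powMonoidHom d : M →* M).range
  have hmk : ((γ ^ (j : ℕ) : M) : M ⧸ H) = ((γ ^ (j' : ℕ) : M) : M ⧸ H) := by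
    rw [QuotientGroup.eq]
    refine ⟨y * y'⁻¹, ?_⟩
    rw [powMonoidHom_apply, mul_pow, inv_pow, mul_inv_eq_iff_eq_mul, mul_assoc, ← h,
      inv_mul_cancel_left]
  rw [QuotientGroup.mk_pow, QuotientGroup.mk_pow, pow_eq_pow_iff_modEq,
    orderOf_mk_powMonoidHom_range hγ hd] at hmk
  exact Fin.ext (hmk.eq_of_lt_of_lt j.2 j'.2)

theorem card_image_pow [Fintype M] [DecidableEq M] {d : ℕ} (hd : d ∣ Nat.card M) :
    #(univ.image fun y : M => y ^ d) = Nat.card M / d := by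
  have : IsCyclic M := ⟨γ, hγ⟩
  have hrange := IsCyclic.card_powMonoidHom_range (G := M) d
  rw [Nat.gcd_eq_right hd] at hrange
  rw [← hrange, ← SetLike.coe_sort_coe, MonoidHom.coe_range, Nat.card_eq_fintype_card,
    ← Set.toFinset_card, Set.toFinset_range]
  rfl

end CyclicGroup

section CyclotomicMapping

variable {F : Type*} [Field F] {γ : Fˣ} {l r d : ℕ}

def IsCyclotomicMapping (γ : Fˣ) (r : ℕ) (a : Fin l → F) (g : F → F) : Prop :=
  g 0 = 0 ∧ ∀ (i : Fin l) (y : Fˣ),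
    g ((γ : F) ^ (i : ℕ) * (y : F) ^ l) = a i * ((γ : F) ^ (i : ℕ) * (y : F) ^ l) ^ r

theorem IsCyclotomicMapping.mem_range_iff [Finite F] {a : Fin l → F} {g : F → F}
    (hg : IsCyclotomicMapping γ r a g) (hγ : ∀ x, x ∈ Subgroup.zpowers γ) (hl : l ≠ 0)
    {w : F} (hw : w ≠ 0) :
    w ∈ Set.range g ↔
      ∃ (i : Fin l) (z : Fˣ), w = a i * ((γ : F) ^ (i : ℕ) * (z : F) ^ l) ^ r := by
  constructor
  · rintro ⟨x, rfl⟩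
    have hx : x ≠ 0 := by rintro rfl; exact hw hg.1
    obtain ⟨i, z, hz⟩ := exists_eq_pow_mul_pow_of_forall_mem_zpowers hγ hl (Units.mk0 x hx)
    have hxz : x = (γ : F) ^ (i : ℕ) * (z : F) ^ l := by simpa using congrArg Units.val hz
    exact ⟨i, z, hxz ▸ hg.2 i z⟩
  · rintro ⟨i, z, rfl⟩
    exact ⟨_, hg.2 i z⟩

variable [Fintype F] [DecidableEq F]

/-- `γ^(j - ir) (Fˣ)^d`: the coefficients `b` for which `b · (γ^i (Fˣ)^l)^r` meets `γ^j (Fˣ)^d`. -/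
def hittingCoeffs (γ : Fˣ) (d r i j : ℕ) : Finset F :=
  (univ.image fun y : Fˣ => γ ^ j * (γ ^ (i * r))⁻¹ * y ^ d).image Units.val

theorem mem_hittingCoeffs_iff (hdr : d ∣ l * r) (i j : ℕ) (b : F) :
    b ∈ hittingCoeffs γ d r i j ↔
      ∃ y z : Fˣ, (γ : F) ^ j * (y : F) ^ d = b * ((γ : F) ^ i * (z : F) ^ l) ^ r := by
  simp only [hittingCoeffs, mem_image, mem_univ, true_and, exists_exists_eq_and]
  constructor
  · rintro ⟨y, rfl⟩
    refine ⟨y, 1, ?_⟩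
    push_cast
    field_simp
    ring
  · rintro ⟨y, z, h⟩
    obtain ⟨e, he⟩ := hdr
    refine ⟨y * (z ^ e)⁻¹, ?_⟩
    have hz : ((z : F) ^ e) ^ d = (z : F) ^ (l * r) := by rw [← pow_mul, he, mul_comm]
    push_cast
    rw [mul_pow, inv_pow, hz]
    field_simp
    rw [h]
    ring

theorem IsCyclotomicMapping.forall_notMem_range_iff {a : Fin l → F} {g : F → F}
    (hg : IsCyclotomicMapping γ r a g) (hγ : ∀ x, x ∈ Subgroup.zpowers γ) (hl : l ≠ 0)
    (hdr : d ∣ l * r) (j : ℕ) :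
    (∀ y : Fˣ, (γ : F) ^ j * (y : F) ^ d ∉ Set.range g) ↔
      ∀ i : Fin l, a i ∉ hittingCoeffs γ d r i j := by
  have hne : ∀ y : Fˣ, (γ : F) ^ j * (y : F) ^ d ≠ 0 := fun y =>
    mul_ne_zero (pow_ne_zero _ γ.ne_zero) (pow_ne_zero _ y.ne_zero)
  simp only [hg.mem_range_iff hγ hl (hne _), mem_hittingCoeffs_iff hdr, not_exists]
  exact forall_comm

theorem card_hittingCoeffs (hγ : ∀ x, x ∈ Subgroup.zpowers γ) (hd : d ∣ Nat.card Fˣ)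
    (i j : ℕ) :
    #(hittingCoeffs (F := F) γ d r i j) = Nat.card Fˣ / d := by
  rw [hittingCoeffs, card_image_of_injective _ Units.val_injective]
  change #(univ.image ((γ ^ j * (γ ^ (i * r))⁻¹ * ·) ∘ (· ^ d))) = _
  rw [← image_image, card_image_of_injective _ (mul_right_injective _), card_image_pow hγ hd]

theorem disjoint_hittingCoeffs (hγ : ∀ x, x ∈ Subgroup.zpowers γ) (hd : d ∣ Nat.card Fˣ)
    (i : ℕ) :
    Pairwise (Disjoint on fun j : Fin d => hittingCoeffs (F := F) γ d r i j) := by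
  intro j j' hjj'
  simp only [onFun, hittingCoeffs, disjoint_left, mem_image, mem_univ, true_and,
    exists_exists_eq_and, not_exists]
  rintro _ ⟨y, rfl⟩ y' h
  refine hjj' (Fin.eq_of_pow_mul_pow_eq hγ hd (y := y) (y' := y') ?_)
  have hu := (Units.val_injective h).symm
  rw [mul_right_comm, mul_right_comm (γ ^ (j' : ℕ))] at hu
  exact mul_right_cancel hu

end CyclotomicMapping

theorem cyclotomic_mapping_missing_cosets_moments_general
    (F : Type) [Field F] [Fintype F] (q : ℕ) (hq : q = Fintype.card F)
    (s l r t : ℕ)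
    (hls : l * s = q - 1) (ht : t = Nat.gcd r s)
    (γ : Fˣ) (hγ : ∀ x : Fˣ, x ∈ Subgroup.zpowers γ)
    (G : (Fin l → F) → F → F)
    (hG : ∀ a, G a 0 = 0 ∧
      ∀ (i : Fin l) (y : Fˣ), G a ((γ : F) ^ (i : ℕ) * (y : F) ^ l)
        = a i * ((γ : F) ^ (i : ℕ) * (y : F) ^ l) ^ r)
    (Y : (F → F) → ℕ)
    (hY : ∀ g, Y g =
      Nat.card {j : Fin (t * l) // ∀ y : Fˣ, (γ : F) ^ (j : ℕ) * (y : F) ^ (t * l) ∉ Set.range g})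
    (k : ℕ) :
    (∑ a : Fin l → F, (((Y (G a)).descFactorial k : ℕ) : ℝ)) / (q : ℝ) ^ l
      = (((t * l).descFactorial k : ℕ) : ℝ) * (1 - (s : ℝ) * (k : ℝ) / ((t : ℝ) * (q : ℝ))) ^ l := by
  classical
  have hunits : Nat.card Fˣ = l * s := by rw [Nat.card_units, Nat.card_eq_fintype_card, ← hq, hls]
  obtain ⟨hl, hs⟩ : l ≠ 0 ∧ s ≠ 0 := mul_ne_zero_iff.1 (hunits ▸ Nat.card_pos.ne')
  have hts : t ∣ s := ht ▸ Nat.gcd_dvd_right r s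
  have hd : t * l ∣ Nat.card Fˣ := hunits ▸ mul_comm l s ▸ mul_dvd_mul_right hts l
  have hdr : t * l ∣ l * r := mul_comm r l ▸ mul_dvd_mul_right (ht ▸ Nat.gcd_dvd_left r s) l
  have hYG : ∀ a, Y (G a) =
      Nat.card {j : Fin (t * l) // ∀ i : Fin l, a i ∉ hittingCoeffs γ (t * l) r i j} := fun a => by
    simp_rw [hY, IsCyclotomicMapping.forall_notMem_range_iff (hG a) hγ hl hdr]
  simp_rw [hYG]
  have hsum := sum_descFactorial_natCard_forall_notMem (R := ℝ)
    (B := fun (i : Fin l) (j : Fin (t * l)) => hittingCoeffs γ (t * l) r i j)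
    (fun i => disjoint_hittingCoeffs hγ hd i)
    (fun i j => card_hittingCoeffs hγ hd i j) k
  rw [Fintype.card_fin, Fintype.card_fin, ← hq] at hsum
  have hc : ((Nat.card Fˣ / (t * l) : ℕ) : ℝ) = s / t := by
    rw [hunits, mul_comm t, Nat.mul_div_mul_left _ _ (Nat.pos_of_ne_zero hl),
      Nat.cast_div hts (by exact_mod_cast ne_zero_of_dvd_ne_zero hs hts)]
  have hq0 : (q : ℝ) ≠ 0 := by rw [hq]; exact_mod_cast Fintype.card_ne_zero
  rw [hsum, hc, div_eq_iff (pow_ne_zero l hq0), mul_assoc, ← mul_pow]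
  congr 2
  field_simp

/-- Falling factorial moments of the number `Y` of cyclotomic cosets of index `tℓ` missed by
the value set of a random `r`-th order cyclotomic mapping of index `ℓ = (q-1)/s`
(branch constants `a_0, …, a_{ℓ-1}` chosen independently and uniformly from `𝔽_q`):
`𝔼((Y)_k) = (tℓ)_k (1 - sk/(tq))^ℓ`. -/
theorem cyclotomic_mapping_missing_cosets_moments
    (F : Type) [Field F] [Fintype F] (q : ℕ) (hq : q = Fintype.card F)
    (s l r t : ℕ) (hs : 0 < s) (hl : 0 < l) (hr : 0 < r)
    (hls : l * s = q - 1) (ht : t = Nat.gcd r s)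
    (γ : Fˣ) (hγ : ∀ x : Fˣ, x ∈ Subgroup.zpowers γ)
    (G : (Fin l → F) → F → F)
    (hG : ∀ a, G a 0 = 0 ∧
      ∀ (i : Fin l) (y : Fˣ), G a ((γ : F) ^ (i : ℕ) * (y : F) ^ l)
        = a i * ((γ : F) ^ (i : ℕ) * (y : F) ^ l) ^ r)
    (Y : (F → F) → ℕ)
    (hY : ∀ g, Y g =
      Nat.card {j : Fin (t * l) // ∀ y : Fˣ, (γ : F) ^ (j : ℕ) * (y : F) ^ (t * l) ∉ Set.range g})
    (k : ℕ) (hk : k ≤ t * l) :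
    (∑ a : Fin l → F, (((Y (G a)).descFactorial k : ℕ) : ℝ)) / (q : ℝ) ^ l
      = (((t * l).descFactorial k : ℕ) : ℝ) * (1 - (s : ℝ) * (k : ℝ) / ((t : ℝ) * (q : ℝ))) ^ l :=
  cyclotomic_mapping_missing_cosets_moments_general F q hq s l r t hls ht γ hγ G hG Y hY k
end

section
/- Let q be a prime power with q − 1 = ℓs, r a positive integer, t = gcd(r, s), and γ a fixed generator of 𝔽_q^*. Choose a_0, …, a_{ℓ−1} independently and uniformly at random from 𝔽_q, and let g = f^r_{a_0,…,a_{ℓ−1}} be the associated r-th order cyclotomic mapping of index ℓ. Let T_j = γ^j {x^{tℓ} : x ∈ 𝔽_q^*} for 0 ≤ j ≤ tℓ−1 be the cyclotomic cosets of index tℓ, and let Y be the number of indices j ∈ {0,…,tℓ−1} such that T_j is disjoint from the value set g(𝔽_q). Then for every integer k with 0 ≤ k ≤ tℓ, ℙ(Y = k) = C(tℓ, k) ∑_{j=0}^{tℓ−k} (−1)^{tℓ−k−j} C(tℓ−k, j) ( (t + sj)/(tq) )^ℓ. -/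
/-!
Write `m = tℓ` and `s = td`, so that `q - 1 = md`. Because `m ∣ ℓr`, the cyclotomic mapping sends
`C_i = γ^i {y^ℓ}` onto `a_i γ^{ir} {y^m}`, so the coset `T_j = γ^j {y^m}` meets the value set
exactly when `a_i γ^{ir} ∈ T_j` for some `i`. The `T_j` are pairwise disjoint with `d` elements
each, so for a fixed set `S` of cosets exactly `q - d|S|` values of each `a_i` avoid all of them,
and `S` is missed by `(q - d|S|)^ℓ` tuples `a`. Inclusion–exclusion over `S` then counts the tuples
missing exactly `k` cosets.
-/

open Finset

section InclusionExclusion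

variable {α ι R : Type*} [Fintype α] [Fintype ι] [DecidableEq ι] [CommRing R]

theorem card_filter_eq_eq_sum_powerset_compl (miss : α → Finset ι) (K : Finset ι) :
    (#{a | miss a = K} : R) = ∑ J ∈ Kᶜ.powerset, (-1 : R) ^ #J * #{a | K ∪ J ⊆ miss a} := by
  classical
  let missedAt (i : ι) : Finset α := {a | i ∈ miss a}
  have h := inclusion_exclusion_sum_inf_compl Kᶜ missedAt
    (fun a => if K ⊆ miss a then (1 : R) else 0)
  have hexact :
      (Kᶜ.inf fun i => (missedAt i)ᶜ).filter (K ⊆ miss ·) = ({a | miss a = K} : Finset α) := by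
    ext a
    simp only [missedAt, mem_filter, mem_inf, mem_compl, mem_univ, true_and]
    constructor
    · rintro ⟨hsub, hK⟩
      exact subset_antisymm (fun i hi => by_contra fun hiK => hsub i hiK hi) hK
    · rintro rfl
      exact ⟨fun i hi => hi, subset_rfl⟩
  have hunion (J : Finset ι) :
      (J.inf missedAt).filter (K ⊆ miss ·) = ({a | K ∪ J ⊆ miss a} : Finset α) := by
    ext a
    simp only [missedAt, mem_filter, mem_inf, mem_univ, true_and, union_subset_iff, and_comm]
    rfl
  simpa only [sum_boole, zsmul_eq_mul, Int.cast_pow, Int.cast_neg, Int.cast_one, hexact, hunion]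
    using h

theorem card_filter_card_eq_sum_range_add (miss : α → Finset ι) (A : ℕ → R)
    (hA : ∀ S : Finset ι, (#{a | S ⊆ miss a} : R) = A #S) (k : ℕ) :
    (#{a | #(miss a) = k} : R) = (Fintype.card ι).choose k *
      ∑ c ∈ range (Fintype.card ι - k + 1),
        (-1 : R) ^ c * (Fintype.card ι - k).choose c * A (k + c) := by
  have hfiber : #{a | #(miss a) = k} = ∑ K ∈ powersetCard k univ, #{a | miss a = K} := by
    rw [card_eq_sum_card_fiberwise (f := miss) (t := powersetCard k univ) fun a ha =>
      mem_powersetCard.mpr ⟨subset_univ _, (mem_filter.mp ha).2⟩]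
    refine sum_congr rfl fun K hK => ?_
    rw [filter_filter]
    exact congrArg card (filter_congr fun a _ => and_iff_right_of_imp fun h =>
      h ▸ (mem_powersetCard.mp hK).2)
  have hterm : ∀ K ∈ powersetCard k (univ : Finset ι), (#{a | miss a = K} : R) =
      ∑ c ∈ range (Fintype.card ι - k + 1),
        (-1 : R) ^ c * (Fintype.card ι - k).choose c * A (k + c) := by
    intro K hK
    rw [mem_powersetCard] at hK
    have hunion : ∀ J ∈ Kᶜ.powerset,
        (-1 : R) ^ #J * #{a | K ∪ J ⊆ miss a} = (-1) ^ #J * A (k + #J) := by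
      intro J hJ
      rw [hA, card_union_of_disjoint
        (disjoint_of_subset_right (mem_powerset.mp hJ) disjoint_compl_right), hK.2]
    rw [card_filter_eq_eq_sum_powerset_compl, sum_congr rfl hunion,
      sum_powerset_apply_card (f := fun c => (-1 : R) ^ c * A (k + c)), card_compl, hK.2]
    refine sum_congr rfl fun c _ => ?_
    rw [nsmul_eq_mul]; ring
  rw [hfiber, Nat.cast_sum, sum_congr rfl hterm, sum_const, card_powersetCard, card_univ,
    nsmul_eq_mul]

theorem card_filter_card_eq_sum_range_sub (miss : α → Finset ι) (A : ℕ → R)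
    (hA : ∀ S : Finset ι, (#{a | S ⊆ miss a} : R) = A #S) {k : ℕ} (hk : k ≤ Fintype.card ι) :
    (#{a | #(miss a) = k} : R) = (Fintype.card ι).choose k *
      ∑ j ∈ range (Fintype.card ι - k + 1), (-1 : R) ^ (Fintype.card ι - k - j) *
        (Fintype.card ι - k).choose j * A (Fintype.card ι - j) := by
  rw [card_filter_card_eq_sum_range_add miss A hA k, ← sum_range_reflect]
  refine congrArg _ (sum_congr rfl fun j hj => ?_)
  have hj : j ≤ Fintype.card ι - k := Nat.lt_succ_iff.mp (mem_range.mp hj)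
  rw [Nat.add_sub_cancel, Nat.choose_symm hj,
    show k + (Fintype.card ι - k - j) = Fintype.card ι - j by omega]

end InclusionExclusion

theorem MonoidHom.card_fiber_mul_card_eq {G M : Type*} [Group G] [Fintype G] [Monoid M]
    [Fintype M] [DecidableEq M] (f : G →* M) (hf : Function.Surjective f) (y : M) :
    #{x | f x = y} * Fintype.card M = Fintype.card G := by
  have hfiber (z : M) : #{x | f x = z} = #{x | f x = y} :=
    card_fiber_eq_of_mem_range f (hf z) (hf y)
  calc #{x | f x = y} * Fintype.card M = ∑ z : M, #{x | f x = z} := by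
        simp [hfiber, mul_comm]
    _ = Fintype.card G := (card_eq_sum_card_fiberwise fun _ _ => mem_univ _).symm

section CosetIndex

variable {G : Type*} [Group G] {g : G} (hg : ∀ x, x ∈ Subgroup.zpowers g) {m : ℕ}
  (hm : m ∣ Nat.card G)

/-- The discrete logarithm to the base `g`, reduced modulo `m`: it maps `x` to the index `j` of
the coset `g ^ j * {w ^ m}` containing `x`. -/
noncomputable def cosetIndex : G →* Multiplicative (ZMod m) :=
  (ZMod.castHom hm (ZMod m)).toAddMonoidHom.toMultiplicative.comp
    (zmodMulEquivOfGenerator hg rfl).symm.toMonoidHom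

theorem cosetIndex_zpow (i : ℤ) :
    cosetIndex hg hm (g ^ i) = Multiplicative.ofAdd (i : ZMod m) := by
  simp [cosetIndex]

theorem cosetIndex_pow (i : ℕ) :
    cosetIndex hg hm (g ^ i) = Multiplicative.ofAdd (i : ZMod m) := by
  simpa using cosetIndex_zpow hg hm i

theorem cosetIndex_surjective : Function.Surjective (cosetIndex hg hm) := fun y => by
  obtain ⟨i, hi⟩ := ZMod.intCast_surjective y.toAdd
  exact ⟨g ^ i, by rw [cosetIndex_zpow, hi, ofAdd_toAdd]⟩

theorem cosetIndex_eq_iff (x : G) (j : ℕ) :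
    cosetIndex hg hm x = Multiplicative.ofAdd (j : ZMod m) ↔ ∃ w, g ^ j * w ^ m = x := by
  constructor
  · obtain ⟨k, rfl⟩ := Subgroup.mem_zpowers_iff.mp (hg x)
    rw [cosetIndex_zpow, EmbeddingLike.apply_eq_iff_eq, ← Int.cast_natCast,
      ZMod.intCast_eq_intCast_iff_dvd_sub]
    rintro ⟨c, hc⟩
    refine ⟨g ^ (-c), ?_⟩
    rw [← zpow_natCast, ← zpow_natCast, ← zpow_mul, ← zpow_add]
    congr 1
    linarith
  · rintro ⟨w, rfl⟩
    rw [map_mul, cosetIndex_pow, map_pow, ← ofAdd_toAdd (cosetIndex hg hm w), ← ofAdd_nsmul,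
      nsmul_eq_mul, ZMod.natCast_self, zero_mul, ofAdd_zero, mul_one]

theorem card_filter_cosetIndex_eq [Fintype G] [NeZero m] (y : Multiplicative (ZMod m)) :
    #{x | cosetIndex hg hm x = y} = Nat.card G / m := by
  have h := (cosetIndex hg hm).card_fiber_mul_card_eq (cosetIndex_surjective hg hm) y
  rw [Fintype.card_multiplicative, ZMod.card, ← Nat.card_eq_fintype_card] at h
  rw [← h, Nat.mul_div_cancel _ (Nat.pos_of_ne_zero (NeZero.ne m))]

end CosetIndex

theorem exists_pow_mul_pow_eq {G : Type*} [Group G] [Finite G] {g : G}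
    (hg : ∀ x, x ∈ Subgroup.zpowers g) {l : ℕ} (hl : 0 < l) (x : G) :
    ∃ (i : Fin l) (z : G), g ^ (i : ℕ) * z ^ l = x := by
  obtain ⟨n, rfl : g ^ n = x⟩ := mem_powers_iff_mem_zpowers.mpr (hg x)
  exact ⟨⟨n % l, Nat.mod_lt n hl⟩, g ^ (n / l), by rw [← pow_mul, ← pow_add, Nat.mod_add_div']⟩

section CyclotomicCoset

variable {F : Type*} [Field F] [Fintype F] [DecidableEq F]

def cyclotomicCoset (γ : Fˣ) (m j : ℕ) : Finset F :=
  univ.image fun y : Fˣ => (γ : F) ^ j * (y : F) ^ m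

variable {γ : Fˣ} {m : ℕ}

theorem mem_cyclotomicCoset_iff (hγ : ∀ x, x ∈ Subgroup.zpowers γ) (hm : m ∣ Nat.card Fˣ)
    {c : F} {j : ℕ} :
    c ∈ cyclotomicCoset γ m j ↔
      ∃ u : Fˣ, cosetIndex hγ hm u = Multiplicative.ofAdd (j : ZMod m) ∧ (u : F) = c := by
  simp only [cyclotomicCoset, mem_image, mem_univ, true_and, cosetIndex_eq_iff]
  constructor
  · rintro ⟨y, rfl⟩
    exact ⟨γ ^ j * y ^ m, ⟨y, rfl⟩, by push_cast; rfl⟩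
  · rintro ⟨u, ⟨y, rfl⟩, rfl⟩
    exact ⟨y, by push_cast; rfl⟩

theorem card_cyclotomicCoset (hγ : ∀ x, x ∈ Subgroup.zpowers γ) (hm : m ∣ Nat.card Fˣ) (j : ℕ) :
    #(cyclotomicCoset γ m j) = Nat.card Fˣ / m := by
  have : NeZero m := ⟨fun h => by simp [h] at hm⟩
  have hmap : cyclotomicCoset γ m j =
      ({u | cosetIndex hγ hm u = Multiplicative.ofAdd (j : ZMod m)} : Finset Fˣ).map
        ⟨Units.val, Units.val_injective⟩ := by
    ext c
    simp [mem_cyclotomicCoset_iff hγ hm]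
  rw [hmap, card_map, card_filter_cosetIndex_eq]

theorem pairwiseDisjoint_cyclotomicCoset (hγ : ∀ x, x ∈ Subgroup.zpowers γ)
    (hm : m ∣ Nat.card Fˣ) (S : Set (Fin m)) :
    S.PairwiseDisjoint fun j => cyclotomicCoset γ m j := by
  intro j _ j' _ hjj'
  refine disjoint_left.mpr fun c hc hc' => hjj' ?_
  obtain ⟨u, hu, rfl⟩ := (mem_cyclotomicCoset_iff hγ hm).mp hc
  obtain ⟨u', hu', hu'c⟩ := (mem_cyclotomicCoset_iff hγ hm).mp hc'
  rw [Units.val_inj.mp hu'c, hu, EmbeddingLike.apply_eq_iff_eq,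
    ZMod.natCast_eq_natCast_iff'] at hu'
  exact Fin.ext (by simpa [Nat.mod_eq_of_lt] using hu')

theorem card_filter_forall_mul_notMem_cyclotomicCoset_add (hγ : ∀ x, x ∈ Subgroup.zpowers γ)
    (hm : m ∣ Nat.card Fˣ) (u : Fˣ) (S : Finset (Fin m)) :
    #{c : F | ∀ j ∈ S, c * u ∉ cyclotomicCoset γ m j} + Nat.card Fˣ / m * #S =
      Fintype.card F := by
  have hshift : #{c : F | ∀ j ∈ S, c * u ∉ cyclotomicCoset γ m j} =
      #(S.biUnion fun j => cyclotomicCoset γ m j)ᶜ := by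
    rw [← map_univ_equiv (Equiv.mulRight₀ ((u⁻¹ : Fˣ) : F) u⁻¹.ne_zero), filter_map, card_map]
    congr 1
    ext c
    simp
  have hunion : #(S.biUnion fun j => cyclotomicCoset γ m j) = Nat.card Fˣ / m * #S := by
    rw [card_biUnion (pairwiseDisjoint_cyclotomicCoset hγ hm S)]
    simp [card_cyclotomicCoset hγ hm, mul_comm]
  rw [hshift, ← hunion, card_compl_add_card]

theorem exists_mem_range_iff_exists_mem_cyclotomicCoset {l r : ℕ}
    (hγ : ∀ x, x ∈ Subgroup.zpowers γ) (hl : 0 < l) (hm : m ∣ l * r) {f : F → F}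
    {a : Fin l → F} (hf0 : f 0 = 0)
    (hf : ∀ (i : Fin l) (y : Fˣ),
      f ((γ : F) ^ (i : ℕ) * (y : F) ^ l) = a i * ((γ : F) ^ (i : ℕ) * (y : F) ^ l) ^ r)
    (j : ℕ) :
    (∃ y : Fˣ, (γ : F) ^ j * (y : F) ^ m ∈ Set.range f) ↔
      ∃ i : Fin l, a i * (γ : F) ^ ((i : ℕ) * r) ∈ cyclotomicCoset γ m j := by
  constructor
  · rintro ⟨y, x, hx⟩
    have hx0 : x ≠ 0 := by
      rintro rfl
      exact (γ ^ j * y ^ m).ne_zero (by rw [hf0] at hx; push_cast; exact hx.symm)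
    obtain ⟨i, z, hz⟩ := exists_pow_mul_pow_eq hγ hl (Units.mk0 x hx0)
    obtain ⟨c, hc⟩ := hm
    refine ⟨i, mem_image.mpr ⟨y * (z ^ c)⁻¹, mem_univ _, ?_⟩⟩
    have hfx := hf i z
    rw [← Units.val_mk0 hx0, ← hz] at hx
    push_cast at hx
    rw [hx, mul_pow, ← pow_mul, ← pow_mul, hc] at hfx
    push_cast
    rw [mul_pow, inv_pow, ← pow_mul, ← mul_assoc, hfx, mul_comm c m]
    field_simp
  · rintro ⟨i, hi⟩
    obtain ⟨y, -, hy⟩ := mem_image.mp hi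
    exact ⟨y, (γ : F) ^ (i : ℕ) * ((1 : Fˣ) : F) ^ l, by rw [hf, hy]; simp [pow_mul]⟩

def missedCosets (γ : Fˣ) (m r : ℕ) {l : ℕ} (a : Fin l → F) : Finset (Fin m) :=
  {j | ∀ i, a i * (γ : F) ^ ((i : ℕ) * r) ∉ cyclotomicCoset γ m j}

theorem card_forall_notMem_range_eq_card_missedCosets {l r : ℕ}
    (hγ : ∀ x, x ∈ Subgroup.zpowers γ) (hl : 0 < l) (hm : m ∣ l * r) {f : F → F}
    {a : Fin l → F} (hf0 : f 0 = 0)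
    (hf : ∀ (i : Fin l) (y : Fˣ),
      f ((γ : F) ^ (i : ℕ) * (y : F) ^ l) = a i * ((γ : F) ^ (i : ℕ) * (y : F) ^ l) ^ r) :
    Nat.card {j : Fin m // ∀ y : Fˣ, (γ : F) ^ (j : ℕ) * (y : F) ^ m ∉ Set.range f} =
      #(missedCosets γ m r a) := by
  rw [Nat.card_eq_fintype_card, Fintype.card_subtype]
  congr 1
  ext j
  simpa [missedCosets] using
    (exists_mem_range_iff_exists_mem_cyclotomicCoset hγ hl hm hf0 hf j).not

theorem card_filter_subset_missedCosets {R : Type*} [CommRing R]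
    (hγ : ∀ x, x ∈ Subgroup.zpowers γ) (hm : m ∣ Nat.card Fˣ) (r l : ℕ) (S : Finset (Fin m)) :
    (#{a : Fin l → F | S ⊆ missedCosets γ m r a} : R) =
      ((Fintype.card F : R) - (Nat.card Fˣ / m : ℕ) * #S) ^ l := by
  have hpi : ({a | S ⊆ missedCosets γ m r a} : Finset (Fin l → F)) =
      Fintype.piFinset fun i : Fin l => ({c | ∀ j ∈ S,
        c * ((γ ^ ((i : ℕ) * r) : Fˣ) : F) ∉ cyclotomicCoset γ m j} : Finset F) := by
    ext a
    simp [missedCosets, subset_iff, forall_comm (α := Fin l)]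
  have hfactor (u : Fˣ) : (#{c : F | ∀ j ∈ S, c * u ∉ cyclotomicCoset γ m j} : R) =
      (Fintype.card F : R) - (Nat.card Fˣ / m : ℕ) * #S := by
    rw [eq_sub_iff_add_eq, ← Nat.cast_mul, ← Nat.cast_add,
      card_filter_forall_mul_notMem_cyclotomicCoset_add hγ hm]
  simp only [hpi, Fintype.card_piFinset, Nat.cast_prod, hfactor, prod_const, card_univ,
    Fintype.card_fin]

end CyclotomicCoset

theorem cyclotomic_mapping_missing_cosets_distribution_general
    (F : Type) [Field F] [Fintype F] (q : ℕ) (hq : q = Fintype.card F)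
    (s l r t : ℕ)
    (hls : l * s = q - 1) (ht : t = Nat.gcd r s)
    (γ : Fˣ) (hγ : ∀ x : Fˣ, x ∈ Subgroup.zpowers γ)
    (G : (Fin l → F) → F → F)
    (hG : ∀ a, G a 0 = 0 ∧
      ∀ (i : Fin l) (y : Fˣ), G a ((γ : F) ^ (i : ℕ) * (y : F) ^ l)
        = a i * ((γ : F) ^ (i : ℕ) * (y : F) ^ l) ^ r)
    (Y : (F → F) → ℕ)
    (hY : ∀ g, Y g =
      Nat.card {j : Fin (t * l) // ∀ y : Fˣ, (γ : F) ^ (j : ℕ) * (y : F) ^ (t * l) ∉ Set.range g})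
    (k : ℕ) (hk : k ≤ t * l) :
    (Nat.card {a : Fin l → F // Y (G a) = k} : ℝ) / (q : ℝ) ^ l
      = ((t * l).choose k : ℝ) *
          ∑ j ∈ Finset.range (t * l - k + 1),
            (-1 : ℝ) ^ (t * l - k - j) * ((t * l - k).choose j : ℝ) *
              (((t : ℝ) + (s : ℝ) * (j : ℝ)) / ((t : ℝ) * (q : ℝ))) ^ l := by
  classical
  obtain ⟨d, rfl⟩ : t ∣ s := ht ▸ Nat.gcd_dvd_right r s
  have hq' : q = Nat.card Fˣ + 1 := by
    rw [hq, Fintype.card_eq_card_units_add_one, Nat.card_eq_fintype_card]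
  have hcard : Nat.card Fˣ = t * l * d := by rw [show t * l * d = l * (t * d) by ring, hls]; omega
  obtain ⟨⟨ht0, hl⟩, -⟩ : (0 < t ∧ 0 < l) ∧ 0 < d := by
    simpa only [hcard, CanonicallyOrderedAdd.mul_pos] using (Nat.card_pos : 0 < Nat.card Fˣ)
  have hm : t * l ∣ Nat.card Fˣ := hcard ▸ dvd_mul_right _ _
  have hmr : t * l ∣ l * r := by
    rw [mul_comm l r]; exact mul_dvd_mul_right (ht ▸ Nat.gcd_dvd_left r _) l
  have hY' (a : Fin l → F) : Y (G a) = #(missedCosets γ (t * l) r a) :=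
    (hY _).trans (card_forall_notMem_range_eq_card_missedCosets hγ hl hmr (hG a).1 (hG a).2)
  have hfin : Nat.card {a : Fin l → F // Y (G a) = k} =
      #{a : Fin l → F | #(missedCosets γ (t * l) r a) = k} := by
    simp [Nat.card_eq_fintype_card, Fintype.card_subtype, hY']
  have hA (S : Finset (Fin (t * l))) :
      (#{a : Fin l → F | S ⊆ missedCosets γ (t * l) r a} : ℝ) = ((q : ℝ) - d * #S) ^ l := by
    rw [card_filter_subset_missedCosets hγ hm, hcard, hq,
      Nat.mul_div_cancel_left _ (by positivity)]
  rw [hfin, card_filter_card_eq_sum_range_sub _ (fun c => ((q : ℝ) - d * c) ^ l) hA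
    (by simpa using hk), Fintype.card_fin, mul_div_assoc, sum_div]
  refine congrArg _ (sum_congr rfl fun j hj => ?_)
  have hj : j ≤ t * l := by have := mem_range.mp hj; omega
  rw [mul_div_assoc, ← div_pow, Nat.cast_sub hj, hq', hcard]
  congr 2
  push_cast
  field_simp
  ring

/-- The exact distribution of the number `Y` of cyclotomic cosets of index `tℓ` missed by the
value set of a random `r`-th order cyclotomic mapping of index `ℓ = (q-1)/s`
(branch constants `a_0, …, a_{ℓ-1}` chosen independently and uniformly from `𝔽_q`):
`ℙ(Y = k) = C(tℓ,k) ∑_{j=0}^{tℓ-k} (-1)^{tℓ-k-j} C(tℓ-k,j) ((t+sj)/(tq))^ℓ`. -/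
theorem cyclotomic_mapping_missing_cosets_distribution
    (F : Type) [Field F] [Fintype F] (q : ℕ) (hq : q = Fintype.card F)
    (s l r t : ℕ) (hs : 0 < s) (hl : 0 < l) (hr : 0 < r)
    (hls : l * s = q - 1) (ht : t = Nat.gcd r s)
    (γ : Fˣ) (hγ : ∀ x : Fˣ, x ∈ Subgroup.zpowers γ)
    (G : (Fin l → F) → F → F)
    (hG : ∀ a, G a 0 = 0 ∧
      ∀ (i : Fin l) (y : Fˣ), G a ((γ : F) ^ (i : ℕ) * (y : F) ^ l)
        = a i * ((γ : F) ^ (i : ℕ) * (y : F) ^ l) ^ r)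
    (Y : (F → F) → ℕ)
    (hY : ∀ g, Y g =
      Nat.card {j : Fin (t * l) // ∀ y : Fˣ, (γ : F) ^ (j : ℕ) * (y : F) ^ (t * l) ∉ Set.range g})
    (k : ℕ) (hk : k ≤ t * l) :
    (Nat.card {a : Fin l → F // Y (G a) = k} : ℝ) / (q : ℝ) ^ l
      = ((t * l).choose k : ℝ) *
          ∑ j ∈ Finset.range (t * l - k + 1),
            (-1 : ℝ) ^ (t * l - k - j) * ((t * l - k).choose j : ℝ) *
              (((t : ℝ) + (s : ℝ) * (j : ℝ)) / ((t : ℝ) * (q : ℝ))) ^ l :=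
  cyclotomic_mapping_missing_cosets_distribution_general F q hq s l r t hls ht γ hγ G hG Y hY k hk
end

section
/- Let q be a prime power with q − 1 = ℓs, r a positive integer, t = gcd(r, s), and γ a fixed generator of 𝔽_q^*. Choose a_0, …, a_{ℓ−1} independently and uniformly at random from 𝔽_q, and let g = f^r_{a_0,…,a_{ℓ−1}} be the associated r-th order cyclotomic mapping of index ℓ. Then for every integer k with 0 ≤ k ≤ tℓ, the probability that the value set g(𝔽_q) has cardinality 1 + k·s/t equals C(tℓ, k) ∑_{j=0}^{k} (−1)^{k−j} C(k, j) ( (t + sj)/(tq) )^ℓ. -/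
/-!
Write a nonzero `x` as `γ ^ i * y ^ l`. Then `f x = a_i γ^{ir} · y^{lr}`, so branch `i`
contributes `0` when `a_i = 0` and otherwise a whole coset of the subgroup `H` of `lr`-th powers of
`𝔽_q^*`, which is cyclic: `|H| = s/t` and `[𝔽_q^* : H] = tℓ`. Hence `|f(𝔽_q)| = 1 + (s/t) · N`,
where `N` is the number of cosets hit, and each coefficient `a_i` independently misses (`a_i = 0`)
or hits a prescribed coset in `s/t` ways. Counting the choices with `N = k` is an occupancy
problem: exactly `(1 + (s/t) j)^ℓ` choices hit only cosets from a given set of `j` cosets, and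
inclusion–exclusion over the missed cosets gives the alternating sum.
-/

open Finset

section Occupancy

variable {ι E Q : Type*} [DecidableEq Q]

lemma card_filter_mem_insertNone [Fintype E] {p : E → Option Q} {m : ℕ}
    (hnone : #{e | p e = none} = 1) (hsome : ∀ x, #{e | p e = some x} = m) (S : Finset Q) :
    #{e | p e ∈ S.insertNone} = 1 + m * #S := by
  rw [← sum_card_fiberwise_eq_card_filter, sum_insertNone, hnone,
    sum_congr rfl fun x _ => hsome x, sum_const, smul_eq_mul, mul_comm]

variable [Fintype Q]

def hitSet [Fintype ι] (p : ι → E → Option Q) (c : ι → E) : Finset Q :=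
  {x | ∃ i, p i (c i) = some x}

lemma hitSet_subset_iff [Fintype ι] {p : ι → E → Option Q} {c : ι → E} {S : Finset Q} :
    hitSet p c ⊆ S ↔ ∀ i, p i (c i) ∈ S.insertNone := by
  simp only [hitSet, subset_iff, mem_filter_univ, mem_insertNone, Option.mem_def]
  grind

lemma coe_hitSet [Fintype ι] (p : ι → E → Option Q) (c : ι → E) :
    (hitSet p c : Set Q) = {x | ∃ i, p i (c i) = some x} :=
  coe_filter_univ _

variable [Fintype ι] [DecidableEq ι] [Fintype E] {p : ι → E → Option Q} {m : ℕ}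

lemma card_hitSet_subset (hnone : ∀ i, #{e | p i e = none} = 1)
    (hsome : ∀ i x, #{e | p i e = some x} = m) (S : Finset Q) :
    #{c | hitSet p c ⊆ S} = (1 + m * #S) ^ Fintype.card ι := by
  have : ({c | hitSet p c ⊆ S} : Finset (ι → E)) =
      Fintype.piFinset fun i => {e | p i e ∈ S.insertNone} := by
    ext c
    simp [hitSet_subset_iff]
  rw [this, Fintype.card_piFinset,
    prod_congr rfl fun i _ => card_filter_mem_insertNone (hnone i) (hsome i) S, prod_const,
    card_univ]

variable [DecidableEq E]

lemma filter_inf_notMem_hitSet (S T : Finset Q) :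
    ({c ∈ T.inf fun x => ({c | x ∉ hitSet p c} : Finset (ι → E)) | hitSet p c ⊆ S}
      : Finset (ι → E)) = ({c | hitSet p c ⊆ S \ T} : Finset (ι → E)) := by
  ext c
  simp only [mem_filter, mem_inf, mem_univ, true_and, subset_sdiff, disjoint_left]
  exact ⟨fun ⟨h₁, h₂⟩ => ⟨h₂, fun x hx hxT => h₁ x hxT hx⟩,
    fun ⟨h₁, h₂⟩ => ⟨fun x hxT hx => h₂ hx hxT, h₁⟩⟩

lemma card_hitSet_eq {R : Type*} [CommRing R] (hnone : ∀ i, #{e | p i e = none} = 1)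
    (hsome : ∀ i x, #{e | p i e = some x} = m) (S : Finset Q) :
    (#{c | hitSet p c = S} : R) = ∑ j ∈ range (#S + 1),
      (-1) ^ (#S - j) * ((#S).choose j : R) * (1 + m * j) ^ Fintype.card ι := by
  -- inclusion–exclusion over the classes of `S` that are missed, among the `c` hitting only `S`
  have hincl := inclusion_exclusion_sum_inf_compl S
    (fun x => ({c | x ∉ hitSet p c} : Finset (ι → E)))
    (fun c => if hitSet p c ⊆ S then (1 : R) else 0)
  have hexact : ({c ∈ S.inf fun x => ({c | x ∉ hitSet p c} : Finset (ι → E))ᶜ | hitSet p c ⊆ S}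
      : Finset (ι → E)) = ({c | hitSet p c = S} : Finset (ι → E)) := by
    ext c
    simp only [mem_filter, mem_inf, mem_compl, mem_univ, true_and, not_not, ← subset_iff]
    exact ⟨fun ⟨h₁, h₂⟩ => subset_antisymm h₂ h₁, fun h => ⟨h.ge, h.le⟩⟩
  simp only [sum_boole, hexact, filter_inf_notMem_hitSet, card_hitSet_subset hnone hsome] at hincl
  rw [hincl, sum_congr rfl fun T hT => by rw [card_sdiff_of_subset (mem_powerset.mp hT)],
    sum_powerset_apply_card fun j => (-1 : ℤ) ^ j • (((1 + m * (#S - j)) ^ Fintype.card ι : ℕ) : R),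
    ← sum_range_reflect]
  refine sum_congr rfl fun j hj => ?_
  have hj : j ≤ #S := Nat.lt_succ_iff.mp (mem_range.mp hj)
  rw [Nat.add_sub_cancel, Nat.choose_symm hj, Nat.sub_sub_self hj, nsmul_eq_mul, zsmul_eq_mul]
  push_cast
  ring

theorem card_hitSet_card_eq {R : Type*} [CommRing R] (hnone : ∀ i, #{e | p i e = none} = 1)
    (hsome : ∀ i x, #{e | p i e = some x} = m) (k : ℕ) :
    (#{c | #(hitSet p c) = k} : R) = ((Fintype.card Q).choose k : R) * ∑ j ∈ range (k + 1),
      (-1) ^ (k - j) * (k.choose j : R) * (1 + m * j) ^ Fintype.card ι := by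
  rw [card_eq_sum_card_fiberwise (f := hitSet p) (t := powersetCard k univ)
    fun c hc => mem_powersetCard_univ.mpr (mem_filter.mp hc).2]
  push_cast
  rw [sum_congr rfl fun S hS => ?_, sum_const, card_powersetCard, card_univ, nsmul_eq_mul]
  rw [filter_filter, ← (mem_powersetCard_univ.mp hS), ← card_hitSet_eq hnone hsome]
  congr 3
  ext c
  exact and_iff_right_of_imp (congrArg card)

end Occupancy

lemma exists_eq_pow_mul_pow {G : Type*} [Group G] [Finite G] {γ : G}
    (hγ : ∀ x, x ∈ Subgroup.zpowers γ) {l : ℕ} (hl : 0 < l) (x : G) :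
    ∃ (i : Fin l) (y : G), x = γ ^ (i : ℕ) * y ^ l := by
  obtain ⟨n, rfl⟩ := mem_powers_iff_mem_zpowers.mpr (hγ x)
  exact ⟨⟨n % l, Nat.mod_lt n hl⟩, γ ^ (n / l), by rw [← pow_mul, ← pow_add, Nat.mod_add_div']⟩

section PowRange

variable {G : Type*} [CommGroup G] [IsCyclic G] [Finite G] {l s : ℕ}

lemma card_range_powMonoidHom_mul (hG : Nat.card G = l * s) (r : ℕ) (hl : 0 < l) :
    Nat.card (powMonoidHom (l * r) : G →* G).range = s / s.gcd r := by
  rw [IsCyclic.card_powMonoidHom_range, hG, Nat.gcd_mul_left, Nat.mul_div_mul_left _ _ hl]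

lemma index_range_powMonoidHom_mul (hG : Nat.card G = l * s) (r : ℕ) :
    (powMonoidHom (l * r) : G →* G).range.index = l * s.gcd r := by
  rw [IsCyclic.index_powMonoidHom_range, hG, Nat.gcd_mul_left]

end PowRange

section UnitClass

variable {F : Type*} [Field F] {H : Subgroup Fˣ}

lemma ncard_insert_zero_image_preimage [Finite F] (S : Set (Fˣ ⧸ H)) :
    (insert (0 : F) (Units.val '' (QuotientGroup.mk ⁻¹' S))).ncard = 1 + Nat.card H * S.ncard := by
  rw [Set.ncard_insert_of_notMem (by simp) (Set.toFinite _),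
    Set.ncard_image_of_injective _ Units.val_injective, ← Nat.card_coe_set_eq,
    QuotientGroup.card_preimage_mk, Nat.card_coe_set_eq, add_comm]

variable [DecidableEq F]

variable (H) in
def unitClass (x : F) : Option (Fˣ ⧸ H) :=
  if hx : x = 0 then none else some (Units.mk0 x hx)

lemma unitClass_eq_none_iff {x : F} : unitClass H x = none ↔ x = 0 := by
  unfold unitClass; split_ifs with hx <;> simp [hx]

lemma unitClass_eq_some_iff {x : F} {c : Fˣ ⧸ H} :
    unitClass H x = some c ↔ ∃ w : Fˣ, (w : F) = x ∧ (w : Fˣ ⧸ H) = c := by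
  unfold unitClass
  split_ifs with hx
  · simp [hx]
  · refine ⟨fun h => ⟨_, rfl, Option.some_injective _ h⟩, ?_⟩
    rintro ⟨w, rfl, rfl⟩
    simp

variable [Fintype F]

lemma card_unitClass_eq_none : #{x : F | unitClass H x = none} = 1 := by
  simp [unitClass_eq_none_iff, filter_eq']

variable [DecidableEq (Fˣ ⧸ H)]

lemma card_unitClass_mul_eq (u : Fˣ) (o : Option (Fˣ ⧸ H)) :
    #{x : F | unitClass H (x * u) = o} = #{x : F | unitClass H x = o} :=
  card_equiv (Units.mulRight u) (by simp)

lemma card_unitClass_eq_some (c : Fˣ ⧸ H) : #{x : F | unitClass H x = some c} = Nat.card H := by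
  have : ({x : F | unitClass H x = some c} : Finset F) =
      ({w : Fˣ | (w : Fˣ ⧸ H) = c} : Finset Fˣ).map ⟨Units.val, Units.val_injective⟩ := by
    ext x
    simp [unitClass_eq_some_iff, and_comm]
  rw [this, card_map, ← Fintype.card_subtype, ← Nat.card_eq_fintype_card]
  exact (QuotientGroup.card_preimage_mk H {c}).trans (by simp)

end UnitClass

theorem range_cyclotomic_eq_insert_zero_image_preimage {F : Type*} [Field F] [Finite F] [DecidableEq F]
    {γ : Fˣ} (hγ : ∀ x : Fˣ, x ∈ Subgroup.zpowers γ) {l r : ℕ} (hl : 0 < l) {a : Fin l → F}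
    {g : F → F} (hg0 : g 0 = 0)
    (hg : ∀ (i : Fin l) (y : Fˣ), g ((γ : F) ^ (i : ℕ) * (y : F) ^ l)
      = a i * ((γ : F) ^ (i : ℕ) * (y : F) ^ l) ^ r) :
    Set.range g = insert 0 (Units.val '' (QuotientGroup.mk ⁻¹'
      {c | ∃ i : Fin l,
        unitClass (powMonoidHom (l * r)).range (a i * ↑(γ ^ ((i : ℕ) * r))) = some c})) := by
  have hval : ∀ (i : Fin l) (y : Fˣ),
      g ((γ : F) ^ (i : ℕ) * (y : F) ^ l) = a i * ↑(γ ^ ((i : ℕ) * r)) * ↑(y ^ (l * r)) := by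
    intro i y
    rw [hg, mul_pow, ← pow_mul, ← pow_mul, mul_assoc]
    push_cast
    rfl
  ext v
  simp only [Set.mem_range, Set.mem_insert_iff, Set.mem_image, Set.mem_preimage, Set.mem_ofPred_eq]
  constructor
  · rintro ⟨x, rfl⟩
    rcases eq_or_ne x 0 with rfl | hx
    · exact Or.inl hg0
    obtain ⟨i, y, hxy⟩ := exists_eq_pow_mul_pow hγ hl (Units.mk0 x hx)
    have hx_eq : x = (γ : F) ^ (i : ℕ) * (y : F) ^ l := by simpa using congrArg Units.val hxy
    rcases eq_or_ne (a i) 0 with hai | hai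
    · exact Or.inl (by rw [hx_eq, hval, hai, zero_mul, zero_mul])
    refine Or.inr ⟨Units.mk0 (a i) hai * γ ^ ((i : ℕ) * r) * y ^ (l * r), ⟨i, ?_⟩, ?_⟩
    · have hy : y ^ (l * r) ∈ (powMonoidHom (l * r)).range := ⟨y, rfl⟩
      rw [QuotientGroup.mk_mul_of_mem _ hy]
      exact unitClass_eq_some_iff.mpr ⟨_, by simp, rfl⟩
    · rw [hx_eq, hval]
      push_cast
      rfl
  · rintro (rfl | ⟨w, ⟨i, hi⟩, rfl⟩)
    · exact ⟨0, hg0⟩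
    obtain ⟨u, hu, huw⟩ := unitClass_eq_some_iff.mp hi
    obtain ⟨y, hy⟩ := QuotientGroup.eq.mp huw
    refine ⟨(γ : F) ^ (i : ℕ) * (y : F) ^ l, ?_⟩
    rw [powMonoidHom_apply] at hy
    rw [hval, ← hu, ← Units.val_mul, hy, mul_inv_cancel_left]

theorem cyclotomic_mapping_value_set_size_distribution_general
    (F : Type) [Field F] [Fintype F] (q : ℕ) (hq : q = Fintype.card F)
    (s l r t : ℕ) (hs : 0 < s) (hl : 0 < l)
    (hls : l * s = q - 1) (ht : t = Nat.gcd r s)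
    (γ : Fˣ) (hγ : ∀ x : Fˣ, x ∈ Subgroup.zpowers γ)
    (G : (Fin l → F) → F → F)
    (hG : ∀ a, G a 0 = 0 ∧
      ∀ (i : Fin l) (y : Fˣ), G a ((γ : F) ^ (i : ℕ) * (y : F) ^ l)
        = a i * ((γ : F) ^ (i : ℕ) * (y : F) ^ l) ^ r)
    (k : ℕ) :
    (Nat.card {a : Fin l → F // (Set.range (G a)).ncard = 1 + k * (s / t)} : ℝ) / (q : ℝ) ^ l
      = ((t * l).choose k : ℝ) *
          ∑ j ∈ Finset.range (k + 1),
            (-1 : ℝ) ^ (k - j) * (k.choose j : ℝ) *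
              (((t : ℝ) + (s : ℝ) * (j : ℝ)) / ((t : ℝ) * (q : ℝ))) ^ l := by
  classical
  set H : Subgroup Fˣ := (powMonoidHom (l * r)).range
  have hunits : Nat.card Fˣ = l * s := by
    rw [Nat.card_eq_fintype_card, Fintype.card_units, ← hq, hls]
  have hH : Nat.card H = s / t := by
    rw [card_range_powMonoidHom_mul hunits r hl, Nat.gcd_comm, ht]
  have hQ : Fintype.card (Fˣ ⧸ H) = t * l := by
    rw [← Nat.card_eq_fintype_card, ← Subgroup.index_eq_card, index_range_powMonoidHom_mul hunits,
      Nat.gcd_comm, ht, mul_comm]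
  have htpos : 0 < t := ht ▸ Nat.gcd_pos_of_pos_right r hs
  have hts : t ∣ s := ht ▸ Nat.gcd_dvd_right r s
  set p : Fin l → F → Option (Fˣ ⧸ H) := fun i x => unitClass H (x * ↑(γ ^ ((i : ℕ) * r)))
  have hvalue : ∀ a, (Set.range (G a)).ncard = 1 + s / t * #(hitSet p a) := by
    intro a
    rw [range_cyclotomic_eq_insert_zero_image_preimage hγ hl (hG a).1 (hG a).2,
      ncard_insert_zero_image_preimage, hH, ← Set.ncard_coe_finset, coe_hitSet]
  have hcount : Nat.card {a : Fin l → F // (Set.range (G a)).ncard = 1 + k * (s / t)}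
      = #{a | #(hitSet p a) = k} := by
    rw [Nat.card_eq_fintype_card, Fintype.card_subtype]
    congr 1
    ext a
    rw [mem_filter_univ, mem_filter_univ, hvalue, add_right_inj, mul_comm k,
      Nat.mul_left_cancel_iff (Nat.div_pos (Nat.le_of_dvd hs hts) htpos)]
  rw [hcount, card_hitSet_card_eq
    (fun i => (card_unitClass_mul_eq _ _).trans card_unitClass_eq_none)
    (fun i c => (card_unitClass_mul_eq _ _).trans (card_unitClass_eq_some c)), hQ, Fintype.card_fin,
    hH, Nat.cast_div hts (by exact_mod_cast htpos.ne'), mul_div_assoc, sum_div]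
  congr 1
  refine sum_congr rfl fun j _ => ?_
  rw [mul_div_assoc, ← div_pow]
  congr 2
  field_simp

/-- The exact distribution of the value set size of a random `r`-th order cyclotomic mapping
of index `ℓ = (q-1)/s` (branch constants `a_0, …, a_{ℓ-1}` chosen independently and uniformly
from `𝔽_q`): for `0 ≤ k ≤ tℓ`, the probability that `|V_g| = 1 + k·s/t` equals
`C(tℓ,k) ∑_{j=0}^{k} (-1)^{k-j} C(k,j) ((t+sj)/(tq))^ℓ`. -/
theorem cyclotomic_mapping_value_set_size_distribution
    (F : Type) [Field F] [Fintype F] (q : ℕ) (hq : q = Fintype.card F)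
    (s l r t : ℕ) (hs : 0 < s) (hl : 0 < l) (hr : 0 < r)
    (hls : l * s = q - 1) (ht : t = Nat.gcd r s)
    (γ : Fˣ) (hγ : ∀ x : Fˣ, x ∈ Subgroup.zpowers γ)
    (G : (Fin l → F) → F → F)
    (hG : ∀ a, G a 0 = 0 ∧
      ∀ (i : Fin l) (y : Fˣ), G a ((γ : F) ^ (i : ℕ) * (y : F) ^ l)
        = a i * ((γ : F) ^ (i : ℕ) * (y : F) ^ l) ^ r)
    (k : ℕ) (hk : k ≤ t * l) :
    (Nat.card {a : Fin l → F // (Set.range (G a)).ncard = 1 + k * (s / t)} : ℝ) / (q : ℝ) ^ l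
      = ((t * l).choose k : ℝ) *
          ∑ j ∈ Finset.range (k + 1),
            (-1 : ℝ) ^ (k - j) * (k.choose j : ℝ) *
              (((t : ℝ) + (s : ℝ) * (j : ℝ)) / ((t : ℝ) * (q : ℝ))) ^ l :=
  cyclotomic_mapping_value_set_size_distribution_general F q hq s l r t hs hl hls ht γ hγ G hG k
end

section
/- Let q be a prime power and let g be chosen uniformly at random from the q^{q−1} polynomials over 𝔽_q of degree at most q−1 with g(0) = 0 (equivalently, a uniformly random function g : 𝔽_q → 𝔽_q with g(0) = 0). Then for every integer k with 0 ≤ k ≤ q−1, ℙ(|V_g| = k + 1) = C(q−1, k) ∑_{j=0}^{k} (−1)^{k−j} C(k, j) ((1+j)/q)^{q−1}. -/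
/-!
A map `g` with `g 0 = 0` and `|V_g| = k + 1` is the same as a choice of `T ⊆ 𝔽_q ∖ {0}` with
`|T| = k`, in `C(q-1, k)` ways, together with a map from the `q - 1` nonzero points into
`{0} ∪ T` that hits every point of `T`. Inclusion–exclusion over the subset of `T` that is
missed counts the latter as `∑ⱼ (-1)^(k-j) C(k,j) (1+j)^(q-1)`.
-/

open Finset

section
variable {α β : Type*} [Fintype α] [DecidableEq β]

theorem image_univ_eq_iff {g : α → β} {C : Finset β} :
    image g univ = C ↔ (∀ x, g x ∈ C) ∧ ∀ y ∈ C, ∃ x, g x = y := by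
  simp only [Finset.ext_iff, mem_image, mem_univ, true_and]
  exact ⟨fun h => ⟨fun x => (h _).1 ⟨x, rfl⟩, fun y hy => (h y).2 hy⟩,
    fun ⟨hC, hsurj⟩ y => ⟨fun ⟨x, hx⟩ => hx ▸ hC x, hsurj y⟩⟩

variable [DecidableEq α] [Fintype β]

theorem card_filter_apply_eq_and_forall_mem {z : α} {c : β} {D : Finset β} (hc : c ∈ D) :
    #{g : α → β | g z = c ∧ ∀ x, g x ∈ D} = #D ^ (Fintype.card α - 1) := by
  have hpi : ({g : α → β | g z = c ∧ ∀ x, g x ∈ D} : Finset (α → β))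
      = Fintype.piFinset (Function.update (fun _ => D) z {c}) := by
    ext g
    simp only [mem_filter, mem_univ, true_and, Fintype.mem_piFinset]
    constructor
    · rintro ⟨hz, hD⟩ x
      rcases eq_or_ne x z with rfl | hx
      · simp [hz]
      · simpa [hx] using hD x
    · intro h
      have hz : g z = c := by simpa using h z
      refine ⟨hz, fun x => ?_⟩
      rcases eq_or_ne x z with rfl | hx
      · rwa [hz]
      · simpa [hx] using h x
  rw [hpi, Fintype.card_piFinset, Fintype.prod_eq_mul_prod_compl z,
    prod_congr rfl fun x hx => by rw [Function.update_of_ne (by simpa using hx)]]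
  simp [card_compl]

theorem card_filter_forall_exists_apply_eq (s : Finset (α → β)) (S : Finset β) :
    (#{g ∈ s | ∀ y ∈ S, ∃ x, g x = y} : ℤ)
      = ∑ t ∈ S.powerset, (-1 : ℤ) ^ #t * #{g ∈ s | ∀ x, g x ∉ t} := by
  have key := inclusion_exclusion_sum_inf_compl S (fun y => ({g | ∀ x, g x ≠ y} : Finset (α → β)))
    (fun g => if g ∈ s then (1 : ℤ) else 0)
  simp only [sum_boole, smul_eq_mul] at key
  convert key using 1
  · congr 2; ext g; simp [mem_inf, and_comm]
  · refine sum_congr rfl fun t _ => ?_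
    congr 3; ext g
    simp only [mem_filter, mem_inf, mem_univ, true_and, and_comm]
    exact and_congr_right fun _ =>
      ⟨fun h y hy x hx => h x (hx ▸ hy), fun h x hx => h _ hx x rfl⟩

theorem card_filter_apply_eq_and_image_eq_insert {z : α} {c : β} {T : Finset β} (hc : c ∉ T) :
    (#{g : α → β | g z = c ∧ image g univ = insert c T} : ℤ)
      = ∑ j ∈ range (#T + 1),
          (-1 : ℤ) ^ (#T - j) * (#T).choose j * (1 + j : ℤ) ^ (Fintype.card α - 1) := by
  set A : Finset (α → β) := {g | g z = c ∧ ∀ x, g x ∈ insert c T}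
  have hfiber : ({g | g z = c ∧ image g univ = insert c T} : Finset (α → β))
      = {g ∈ A | ∀ y ∈ T, ∃ x, g x = y} := by
    ext g
    simp only [A, mem_filter, mem_univ, true_and, image_univ_eq_iff, forall_mem_insert]
    constructor
    · rintro ⟨hz, hmem, -, hT⟩
      exact ⟨⟨hz, hmem⟩, hT⟩
    · rintro ⟨⟨hz, hmem⟩, hT⟩
      exact ⟨hz, hmem, ⟨z, hz⟩, hT⟩
  have hterm : ∀ t ∈ T.powerset,
      #{g ∈ A | ∀ x, g x ∉ t} = (1 + (#T - #t)) ^ (Fintype.card α - 1) := by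
    intro t ht
    have htT : t ⊆ T := mem_powerset.1 ht
    have hct : c ∉ t := fun h => hc (htT h)
    have hA : ({g ∈ A | ∀ x, g x ∉ t} : Finset (α → β))
        = ({g | g z = c ∧ ∀ x, g x ∈ insert c T \ t} : Finset (α → β)) := by
      ext g
      simp only [A, mem_filter, mem_univ, true_and, mem_sdiff]
      exact ⟨fun ⟨⟨hz, hmem⟩, hnot⟩ => ⟨hz, fun x => ⟨hmem x, hnot x⟩⟩,
        fun ⟨hz, h⟩ => ⟨⟨hz, fun x => (h x).1⟩, fun x => (h x).2⟩⟩
    rw [hA, card_filter_apply_eq_and_forall_mem (mem_sdiff.2 ⟨mem_insert_self c T, hct⟩),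
      card_sdiff_of_subset (htT.trans (subset_insert c T)), card_insert_of_notMem hc]
    have := card_le_card htT
    congr 1
    omega
  rw [hfiber, card_filter_forall_exists_apply_eq, sum_congr rfl fun t ht => by rw [hterm t ht],
    sum_powerset_apply_card
      (fun m => (-1 : ℤ) ^ m * (((1 + (#T - m)) ^ (Fintype.card α - 1) : ℕ) : ℤ)),
    ← sum_range_reflect]
  refine sum_congr rfl fun j hj => ?_
  have hj : j ≤ #T := Nat.lt_succ_iff.1 (mem_range.1 hj)
  rw [Nat.add_sub_cancel, Nat.sub_sub_self hj, Nat.choose_symm hj, nsmul_eq_mul]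
  push_cast
  ring

theorem card_filter_apply_eq_and_card_image_eq (z : α) (c : β) (k : ℕ) :
    (#{g : α → β | g z = c ∧ #(image g univ) = k + 1} : ℤ)
      = (Fintype.card β - 1).choose k * ∑ j ∈ range (k + 1),
          (-1 : ℤ) ^ (k - j) * k.choose j * (1 + j : ℤ) ^ (Fintype.card α - 1) := by
  have hc_mem {g : α → β} (hz : g z = c) : c ∈ image g univ := mem_image.2 ⟨z, mem_univ z, hz⟩
  have hmaps : ∀ g ∈ ({g | g z = c ∧ #(image g univ) = k + 1} : Finset (α → β)),
      (image g univ).erase c ∈ powersetCard k (univ.erase c) := by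
    intro g hg
    obtain ⟨hz, hcard⟩ := (mem_filter.1 hg).2
    rw [mem_powersetCard, card_erase_of_mem (hc_mem hz), hcard]
    exact ⟨erase_subset_erase c (subset_univ _), rfl⟩
  have hfiber : ∀ T ∈ powersetCard k (univ.erase c),
      #{g ∈ ({g | g z = c ∧ #(image g univ) = k + 1} : Finset (α → β)) |
          (image g univ).erase c = T} = #{g : α → β | g z = c ∧ image g univ = insert c T} := by
    intro T hT
    obtain ⟨hTsub, hTcard⟩ := mem_powersetCard.1 hT
    have hcT : c ∉ T := fun h => (mem_erase.1 (hTsub h)).1 rfl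
    congr 1
    ext g
    simp only [mem_filter, mem_univ, true_and]
    constructor
    · rintro ⟨⟨hz, -⟩, rfl⟩
      exact ⟨hz, (insert_erase (hc_mem hz)).symm⟩
    · rintro ⟨hz, himage⟩
      rw [himage, card_insert_of_notMem hcT, hTcard, erase_insert hcT]
      exact ⟨⟨hz, rfl⟩, rfl⟩
  rw [card_eq_sum_card_fiberwise hmaps, Nat.cast_sum, sum_congr rfl fun T hT => by
    rw [hfiber T hT, card_filter_apply_eq_and_image_eq_insert
      fun h => (mem_erase.1 ((mem_powersetCard.1 hT).1 h)).1 rfl, (mem_powersetCard.1 hT).2]]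
  rw [sum_const, card_powersetCard, card_erase_of_mem (mem_univ c), card_univ, nsmul_eq_mul]
end

theorem random_polynomial_value_set_distribution_general
    (F : Type) [Field F] [Fintype F] (q : ℕ) (hq : q = Fintype.card F)
    (k : ℕ) :
    (Nat.card {g : F → F // g 0 = 0 ∧ (Set.range g).ncard = k + 1} : ℝ) / (q : ℝ) ^ (q - 1)
      = ((q - 1).choose k : ℝ) *
          ∑ j ∈ Finset.range (k + 1),
            (-1 : ℝ) ^ (k - j) * (k.choose j : ℝ) * ((1 + (j : ℝ)) / (q : ℝ)) ^ (q - 1) := by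
  classical
  have hcount : Nat.card {g : F → F // g 0 = 0 ∧ (Set.range g).ncard = k + 1}
      = #{g : F → F | g 0 = 0 ∧ #(image g univ) = k + 1} := by
    simp only [Nat.card_eq_fintype_card, Fintype.card_subtype, Set.ncard_eq_toFinset_card',
      Set.toFinset_range]
  have hcount_int := card_filter_apply_eq_and_card_image_eq (0 : F) (0 : F) k
  rw [← hq] at hcount_int
  have hcount_real : (#{g : F → F | g 0 = 0 ∧ #(image g univ) = k + 1} : ℝ)
      = ((q - 1).choose k : ℝ) * ∑ j ∈ range (k + 1),
          (-1 : ℝ) ^ (k - j) * k.choose j * (1 + j : ℝ) ^ (q - 1) := by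
    exact_mod_cast hcount_int
  rw [hcount, hcount_real, mul_div_assoc, sum_div]
  simp only [div_pow, mul_div_assoc]

/-- The exact distribution of the value set size of a uniformly random polynomial of degree at
most `q-1` over `𝔽_q` with `g(0) = 0` (equivalently, a uniformly random function
`g : 𝔽_q → 𝔽_q` with `g(0) = 0`):
`ℙ(|V_g| = k+1) = C(q-1,k) ∑_{j=0}^{k} (-1)^{k-j} C(k,j) ((1+j)/q)^{q-1}`. -/
theorem random_polynomial_value_set_distribution
    (F : Type) [Field F] [Fintype F] (q : ℕ) (hq : q = Fintype.card F)
    (k : ℕ) (hk : k ≤ q - 1) :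
    (Nat.card {g : F → F // g 0 = 0 ∧ (Set.range g).ncard = k + 1} : ℝ) / (q : ℝ) ^ (q - 1)
      = ((q - 1).choose k : ℝ) *
          ∑ j ∈ Finset.range (k + 1),
            (-1 : ℝ) ^ (k - j) * (k.choose j : ℝ) * ((1 + (j : ℝ)) / (q : ℝ)) ^ (q - 1) :=
  random_polynomial_value_set_distribution_general F q hq k
end

section
/- Let (q_m) be a sequence of prime powers tending to infinity and (k_m) a sequence of positive integers with k_m^2/q_m → 0 (in particular, this covers any fixed k ≥ 1). For each m let g be a uniformly random function g : 𝔽_{q_m} → 𝔽_{q_m} with g(0) = 0 (equivalently a uniformly random polynomial of degree at most q_m−1 with constant term 0). Then ℙ(|V_g| = k_m + 1) / [ (1/k_m!) (q_m − 1)^{k_m} ((k_m + 1)/q_m)^{q_m − 1} ] → 1 as m → ∞. -/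
/-!
A map `g` with `g 0 = 0` and `|V_g| = k + 1` is given by its value set `S ∋ 0`, one of
`(q-1).choose k` sets, and a map from the `q - 1` nonzero points into `S` which, together with
`0`, hits all of `S`. There are at most `(k+1)^(q-1)` such maps and, by a union bound over the `k`
nonzero values that could be missed, at least `(k+1)^(q-1) - k * k^(q-1)`. With `n = q - 1`,
`(1 - k²/n) n^k/k! ≤ n.choose k ≤ n^k/k!` (the lower bound by Bernoulli's inequality), and
`n k^n ≤ k (k+1)^n` makes the loss `k * k^n` at most `(k²/n) (k+1)^n`. So the normalized count
lies between `(1 - k²/n)²` and `1`.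
-/

open Finset Function Filter Topology

section

variable {α β : Type*} [Fintype α] [DecidableEq α]

lemma Fintype.mem_piFinset_update_singleton {a : α} {b : β} {T : Finset β} {g : α → β} :
    g ∈ Fintype.piFinset (update (fun _ => T) a {b}) ↔ g a = b ∧ ∀ x ≠ a, g x ∈ T := by
  simp only [Fintype.mem_piFinset, update_apply]
  constructor
  · intro h
    exact ⟨by simpa using h a, fun x hx => by simpa [hx] using h x⟩
  · rintro ⟨ha, hT⟩ x
    split_ifs with hx
    · simp [hx, ha]
    · exact hT x hx

lemma Fintype.card_piFinset_update_singleton (a : α) (b : β) (T : Finset β) :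
    #(Fintype.piFinset (update (fun _ => T) a {b})) = #T ^ (Fintype.card α - 1) := by
  rw [Fintype.card_piFinset, ← mul_prod_erase univ _ (mem_univ a), update_self, card_singleton,
    one_mul, Finset.prod_congr rfl fun x hx => by rw [update_of_ne (ne_of_mem_erase hx)],
    Finset.prod_const, card_erase_of_mem (mem_univ a), Finset.card_univ]

variable [Fintype β] [DecidableEq β]

lemma card_filter_apply_eq_image_eq_le (a : α) (b : β) (S : Finset β) :
    #{g : α → β | g a = b ∧ univ.image g = S} ≤ #S ^ (Fintype.card α - 1) := by
  rw [← Fintype.card_piFinset_update_singleton a b S]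
  refine card_le_card fun g hg => Fintype.mem_piFinset_update_singleton.2 ?_
  obtain ⟨ha, himage⟩ := (mem_filter.1 hg).2
  exact ⟨ha, fun x _ => himage ▸ mem_image_of_mem g (mem_univ x)⟩

lemma le_card_filter_apply_eq_image_eq_add {a : α} {b : β} {S : Finset β} (hb : b ∈ S) :
    #S ^ (Fintype.card α - 1) ≤
      #{g : α → β | g a = b ∧ univ.image g = S} +
        (#S - 1) * (#S - 1) ^ (Fintype.card α - 1) := by
  have hcover : Fintype.piFinset (update (fun _ => S) a {b}) ⊆
      ({g : α → β | g a = b ∧ univ.image g = S} : Finset (α → β)) ∪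
        (S.erase b).biUnion fun y => Fintype.piFinset (update (fun _ => S.erase y) a {b}) := by
    intro g hg
    obtain ⟨ha, hS⟩ := Fintype.mem_piFinset_update_singleton.1 hg
    have hsub : univ.image g ⊆ S := by
      intro _ hz
      obtain ⟨x, -, rfl⟩ := mem_image.1 hz
      by_cases hx : x = a
      · exact hx ▸ ha ▸ hb
      · exact hS x hx
    by_cases himage : univ.image g = S
    · exact mem_union_left _ (mem_filter.2 ⟨mem_univ g, ha, himage⟩)
    obtain ⟨y, hyS, hy⟩ := exists_of_ssubset (hsub.ssubset_of_ne himage)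
    have hmissed : ∀ x, g x ≠ y := fun x hx => hy (hx ▸ mem_image_of_mem g (mem_univ x))
    refine mem_union_right _ (mem_biUnion.2 ⟨y, mem_erase.2 ⟨?_, hyS⟩, ?_⟩)
    · exact fun hyb => hmissed a (ha.trans hyb.symm)
    · exact Fintype.mem_piFinset_update_singleton.2
        ⟨ha, fun x hx => mem_erase.2 ⟨hmissed x, hS x hx⟩⟩
  calc #S ^ (Fintype.card α - 1)
      = #(Fintype.piFinset (update (fun _ => S) a {b})) :=
        (Fintype.card_piFinset_update_singleton a b S).symm
    _ ≤ #{g : α → β | g a = b ∧ univ.image g = S} +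
          ∑ y ∈ S.erase b, #(Fintype.piFinset (update (fun _ => S.erase y) a {b})) :=
        (card_le_card hcover).trans <| (card_union_le _ _).trans <|
          Nat.add_le_add_left card_biUnion_le _
    _ = #{g : α → β | g a = b ∧ univ.image g = S} +
          (#S - 1) * (#S - 1) ^ (Fintype.card α - 1) := by
        rw [sum_congr rfl fun y hy => by
          rw [Fintype.card_piFinset_update_singleton, card_erase_of_mem (mem_of_mem_erase hy)],
          sum_const, card_erase_of_mem hb, smul_eq_mul]

lemma natCard_ncard_range_eq_sum (a : α) (b : β) (k : ℕ) :
    Nat.card {g : α → β // g a = b ∧ (Set.range g).ncard = k + 1} =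
      ∑ T ∈ powersetCard k (univ.erase b),
        #{g : α → β | g a = b ∧ univ.image g = insert b T} := by
  have hncard (g : α → β) : (Set.range g).ncard = #(univ.image g) := by
    rw [← Set.ncard_coe_finset, coe_image, coe_univ, Set.image_univ]
  simp only [Nat.card_eq_fintype_card, Fintype.card_subtype, hncard]
  have hmaps : ∀ g ∈ ({g | g a = b ∧ #(univ.image g) = k + 1} : Finset (α → β)),
      (univ.image g).erase b ∈ powersetCard k (univ.erase b) := by
    intro g hg
    obtain ⟨ha, hcard⟩ := (mem_filter.1 hg).2
    have hb : b ∈ univ.image g := ha ▸ mem_image_of_mem g (mem_univ a)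
    exact mem_powersetCard.2 ⟨erase_subset_erase b (subset_univ _), by simp [hb, hcard]⟩
  rw [card_eq_sum_card_fiberwise hmaps]
  refine sum_congr rfl fun T hT => ?_
  rw [filter_filter]
  refine congrArg card <| filter_congr fun g _ => ?_
  obtain ⟨hTb, hTcard⟩ := mem_powersetCard.1 hT
  have hbT : b ∉ T := fun h => (mem_erase.1 (hTb h)).1 rfl
  constructor
  · rintro ⟨⟨ha, -⟩, hT⟩
    refine ⟨ha, ?_⟩
    rw [← hT, insert_erase (ha ▸ mem_image_of_mem g (mem_univ a))]
  · rintro ⟨ha, himage⟩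
    exact ⟨⟨ha, by rw [himage, card_insert_of_notMem hbT, hTcard]⟩,
      by rw [himage, erase_insert hbT]⟩

lemma card_insert_of_mem_powersetCard_erase {b : β} {T : Finset β} {k : ℕ}
    (hT : T ∈ powersetCard k (univ.erase b)) : #(insert b T) = k + 1 := by
  obtain ⟨hTb, hTcard⟩ := mem_powersetCard.1 hT
  rw [card_insert_of_notMem fun h => (mem_erase.1 (hTb h)).1 rfl, hTcard]

lemma card_powersetCard_univ_erase (b : β) (k : ℕ) :
    #(powersetCard k (univ.erase b)) = (Fintype.card β - 1).choose k := by
  rw [card_powersetCard, card_erase_of_mem (mem_univ b), card_univ]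

lemma natCard_ncard_range_le (a : α) (b : β) (k : ℕ) :
    Nat.card {g : α → β // g a = b ∧ (Set.range g).ncard = k + 1} ≤
      (Fintype.card β - 1).choose k * (k + 1) ^ (Fintype.card α - 1) := by
  rw [natCard_ncard_range_eq_sum, ← card_powersetCard_univ_erase b k, ← smul_eq_mul,
    ← sum_const]
  refine sum_le_sum fun T hT => ?_
  rw [← card_insert_of_mem_powersetCard_erase hT]
  exact card_filter_apply_eq_image_eq_le a b _

lemma choose_mul_pow_le_natCard_ncard_range_add (a : α) (b : β) (k : ℕ) :
    (Fintype.card β - 1).choose k * (k + 1) ^ (Fintype.card α - 1) ≤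
      Nat.card {g : α → β // g a = b ∧ (Set.range g).ncard = k + 1} +
        (Fintype.card β - 1).choose k * (k * k ^ (Fintype.card α - 1)) := by
  rw [natCard_ncard_range_eq_sum, ← card_powersetCard_univ_erase b k, ← smul_eq_mul,
    ← smul_eq_mul, ← sum_const, ← sum_const, ← sum_add_distrib]
  refine sum_le_sum fun T hT => ?_
  have h := le_card_filter_apply_eq_image_eq_add (a := a) (mem_insert_self b T)
  rwa [card_insert_of_mem_powersetCard_erase hT, Nat.add_sub_cancel] at h

end

lemma Nat.mul_pow_le_mul_add_one_pow (n k : ℕ) : n * k ^ n ≤ k * (k + 1) ^ n := by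
  induction n with
  | zero => simp
  | succ n ih =>
    have hpow : k ^ n ≤ (k + 1) ^ n := Nat.pow_le_pow_left k.le_succ n
    calc (n + 1) * k ^ (n + 1) = k * (n * k ^ n) + k * k ^ n := by ring
      _ ≤ k * (k * (k + 1) ^ n) + k * (k + 1) ^ n := by gcongr
      _ = k * (k + 1) ^ (n + 1) := by ring

lemma mul_pow_le_sq_div_mul_add_one_pow {n : ℕ} (hn : 0 < n) (k : ℕ) :
    (k : ℝ) * k ^ n ≤ k ^ 2 / n * (k + 1) ^ n := by
  have h : ((n * k ^ n : ℕ) : ℝ) ≤ (k * (k + 1) ^ n : ℕ) :=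
    mod_cast Nat.mul_pow_le_mul_add_one_pow n k
  push_cast at h
  rw [div_mul_eq_mul_div, le_div_iff₀ (by positivity)]
  nlinarith [(by positivity : (0 : ℝ) ≤ k)]

lemma one_sub_sq_div_mul_pow_div_le_choose {n k : ℕ} (hn : 0 < n) (hkn : k ≤ n) :
    (1 - (k : ℝ) ^ 2 / n) * (n ^ k / k.factorial) ≤ n.choose k := by
  refine le_trans ?_ (Nat.pow_le_choose k n)
  rw [← mul_div_assoc]
  gcongr
  have hn' : (0 : ℝ) < n := by exact_mod_cast hn
  set a : ℝ := ((n + 1 - k : ℕ) : ℝ) / n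
  have hbern : 1 + k * (a - 1) ≤ a ^ k :=
    one_add_mul_sub_le_pow (by linarith [show 0 ≤ a by positivity]) k
  have ha : a - 1 = -((k : ℝ) - 1) / n := by
    simp only [a]
    rw [Nat.cast_sub (hkn.trans n.le_succ)]
    push_cast
    field_simp
    ring
  calc (1 - (k : ℝ) ^ 2 / n) * n ^ k ≤ (1 + k * (a - 1)) * n ^ k := by
        gcongr
        have hk : (k : ℝ) * (a - 1) = k / n - k ^ 2 / n := by rw [ha]; ring
        linarith [show (0 : ℝ) ≤ k / n by positivity]
    _ ≤ a ^ k * n ^ k := by gcongr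
    _ = ((n + 1 - k : ℕ) : ℝ) ^ k := by rw [← mul_pow, div_mul_cancel₀ _ hn'.ne']

lemma one_sub_sq_div_mul_le_natCard_ncard_range {α β : Type*} [Fintype α] [Fintype β]
    (a : α) (b : β) (k : ℕ) (hα : 0 < Fintype.card α - 1) :
    (1 - (k : ℝ) ^ 2 / (Fintype.card α - 1 : ℕ)) *
        ((Fintype.card β - 1).choose k * (k + 1) ^ (Fintype.card α - 1)) ≤
      Nat.card {g : α → β // g a = b ∧ (Set.range g).ncard = k + 1} := by
  classical
  have hcount : (((Fintype.card β - 1).choose k * (k + 1) ^ (Fintype.card α - 1) : ℕ) : ℝ) ≤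
      (Nat.card {g : α → β // g a = b ∧ (Set.range g).ncard = k + 1} +
        (Fintype.card β - 1).choose k * (k * k ^ (Fintype.card α - 1)) : ℕ) :=
    mod_cast choose_mul_pow_le_natCard_ncard_range_add a b k
  push_cast at hcount
  have herror := mul_pow_le_sq_div_mul_add_one_pow hα k
  nlinarith [((Fintype.card β - 1).choose k).cast_nonneg (α := ℝ)]

lemma normalized_natCard_ncard_range_mem_Icc {F : Type*} [Fintype F] (z : F) {q k : ℕ}
    (hq : Fintype.card F = q) (hq2 : 2 ≤ q) (hk : (k : ℝ) ^ 2 / ((q : ℝ) - 1) ≤ 1) :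
    ((Nat.card {g : F → F // g z = z ∧ (Set.range g).ncard = k + 1} : ℝ) /
          (q : ℝ) ^ (q - 1)) /
        ((1 / (k.factorial : ℝ)) * ((q : ℝ) - 1) ^ k *
          (((k : ℝ) + 1) / (q : ℝ)) ^ (q - 1)) ∈
      Set.Icc ((1 - (k : ℝ) ^ 2 / ((q : ℝ) - 1)) ^ 2) 1 := by
  classical
  obtain ⟨n, rfl⟩ : ∃ n, q = n + 1 := ⟨q - 1, by omega⟩
  have hn : 0 < n := by omega
  have hupper := natCard_ncard_range_le z z k
  have hlower := one_sub_sq_div_mul_le_natCard_ncard_range z z k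
  simp only [hq, Nat.add_sub_cancel] at hupper hlower ⊢
  push_cast at hk ⊢
  simp only [add_sub_cancel_right] at hk ⊢
  set N := Nat.card {g : F → F // g z = z ∧ (Set.range g).ncard = k + 1}
  set ε : ℝ := (k : ℝ) ^ 2 / n
  set M : ℝ := (n : ℝ) ^ k / k.factorial * (k + 1) ^ n
  have hn' : (0 : ℝ) < n := by exact_mod_cast hn
  have hkn : k ≤ n := by
    have hk_sq : (k : ℝ) ≤ k ^ 2 := by exact_mod_cast Nat.le_self_pow two_ne_zero k
    exact_mod_cast hk_sq.trans ((div_le_one hn').1 hk)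
  have hratio : ((N : ℝ) / (n + 1) ^ n) / (1 / k.factorial * n ^ k * ((k + 1) / (n + 1)) ^ n) =
      N / M := by
    simp only [M]
    rw [div_pow]
    field_simp
  rw [hratio, Set.mem_Icc, le_div_iff₀ (by positivity), div_le_one (by positivity)]
  constructor
  · calc (1 - ε) ^ 2 * M = (1 - ε) * ((1 - ε) * (n ^ k / k.factorial) * (k + 1) ^ n) := by ring
      _ ≤ (1 - ε) * (n.choose k * (k + 1) ^ n) := by
          gcongr
          exact one_sub_sq_div_mul_pow_div_le_choose hn hkn
      _ ≤ N := hlower hn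
  · calc (N : ℝ) ≤ n.choose k * (k + 1) ^ n := mod_cast hupper
      _ ≤ M := mul_le_mul_of_nonneg_right (Nat.choose_le_pow_div k n) (by positivity)

theorem random_polynomial_small_value_set_asymptotic_general
    (F : ℕ → Type) [∀ m, Field (F m)] [∀ m, Fintype (F m)]
    (q : ℕ → ℕ) (hq : ∀ m, q m = Fintype.card (F m))
    (hqtop : Filter.Tendsto q Filter.atTop Filter.atTop)
    (k : ℕ → ℕ)
    (hk2 : Filter.Tendsto (fun m => (k m : ℝ) ^ 2 / (q m : ℝ)) Filter.atTop (nhds 0)) :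
    Filter.Tendsto
      (fun m =>
        ((Nat.card {g : F m → F m // g 0 = 0 ∧ (Set.range g).ncard = k m + 1} : ℝ) /
            (q m : ℝ) ^ (q m - 1)) /
          ((1 / ((k m).factorial : ℝ)) * ((q m : ℝ) - 1) ^ (k m) *
            (((k m : ℝ) + 1) / (q m : ℝ)) ^ (q m - 1)))
      Filter.atTop (nhds 1) := by
  have hq2 : ∀ᶠ m in atTop, 2 ≤ q m := hqtop.eventually_ge_atTop 2
  have hε : Tendsto (fun m => (k m : ℝ) ^ 2 / ((q m : ℝ) - 1)) atTop (𝓝 0) := by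
    have hprod := hk2.mul ((tendsto_natCast_div_add_atTop (-1 : ℝ)).comp hqtop)
    rw [zero_mul] at hprod
    refine hprod.congr' ?_
    filter_upwards [hq2] with m hm
    have hq0 : (q m : ℝ) ≠ 0 := by positivity
    simp [div_mul_div_cancel₀ hq0, sub_eq_add_neg]
  have hlim : Tendsto (fun m => (1 - (k m : ℝ) ^ 2 / ((q m : ℝ) - 1)) ^ 2) atTop (𝓝 1) := by
    simpa using ((tendsto_const_nhds (x := (1 : ℝ))).sub hε).pow 2
  have hbounds := (hq2.and (hε.eventually (eventually_le_nhds one_pos))).mono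
    fun m ⟨hm, hεm⟩ => normalized_natCard_ncard_range_mem_Icc (0 : F m) (hq m).symm hm hεm
  exact tendsto_of_tendsto_of_tendsto_of_le_of_le' hlim tendsto_const_nhds
    (hbounds.mono fun _ h => h.1) (hbounds.mono fun _ h => h.2)

/-- Asymptotics for small value sets of random polynomials: let `q_m → ∞` be a sequence of
prime powers (cardinalities of finite fields `F_m`) and `k_m ≥ 1` with `k_m²/q_m → 0`. For a
uniformly random function `g : 𝔽_{q_m} → 𝔽_{q_m}` with `g(0) = 0`, the probability that
`|V_g| = k_m + 1` is asymptotic to `(1/k_m!) (q_m-1)^{k_m} ((k_m+1)/q_m)^{q_m-1}`. -/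
theorem random_polynomial_small_value_set_asymptotic
    (F : ℕ → Type) [∀ m, Field (F m)] [∀ m, Fintype (F m)]
    (q : ℕ → ℕ) (hq : ∀ m, q m = Fintype.card (F m))
    (hqtop : Filter.Tendsto q Filter.atTop Filter.atTop)
    (k : ℕ → ℕ) (hk : ∀ m, 0 < k m)
    (hk2 : Filter.Tendsto (fun m => (k m : ℝ) ^ 2 / (q m : ℝ)) Filter.atTop (nhds 0)) :
    Filter.Tendsto
      (fun m =>
        ((Nat.card {g : F m → F m // g 0 = 0 ∧ (Set.range g).ncard = k m + 1} : ℝ) /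
            (q m : ℝ) ^ (q m - 1)) /
          ((1 / ((k m).factorial : ℝ)) * ((q m : ℝ) - 1) ^ (k m) *
            (((k m : ℝ) + 1) / (q m : ℝ)) ^ (q m - 1)))
      Filter.atTop (nhds 1) :=
  random_polynomial_small_value_set_asymptotic_general F q hq hqtop k hk2
end

section
/- Let q be a prime power, γ a fixed generator of 𝔽_q^*, a, b ∈ 𝔽_q with a ≠ 0, r a positive integer, s a positive divisor of q−1, ℓ = (q−1)/s, t = gcd(r, s), and f ∈ 𝔽_q[x]. Let g(x) = a x^r f(x^s) + b and let c be the cardinality of the set { (γ^{ir} f(γ^{si}))^{s/t} : i = 0, 1, …, ℓ−1 } ⊆ 𝔽_q. Then |V_g| = c·(s/t) + 1 or |V_g| = (c−1)·(s/t) + 1. -/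
/-!
Write `P x = x ^ r * f(x ^ s)`, so that `g = a P + b` and `|V_g| = |P(𝔽_q)|`, with `0 = P 0`.
If `ζ ^ s = 1` then `P (ζ x) = ζ ^ r P x`, and `ζ ↦ ζ ^ r` maps the `s`-th roots of unity onto
the `m`-th roots of unity, `m = s / t`. Hence the nonzero values of `P` are a union of cosets of
`μ_m`, that is, of full fibres of `w ↦ w ^ m`, each of size `m`. Their `m`-th powers are the
nonzero elements of the set counted by `c`, since `P(x) ^ m` only depends on the class of `x`
modulo `μ_s`, and these classes are represented by `γ ^ i`, `0 ≤ i < ℓ`.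
-/

open Polynomial Finset

theorem IsPrimitiveRoot.pow_div_gcd {M : Type*} [CommMonoid M] {η : M} {s : ℕ}
    (hη : IsPrimitiveRoot η s) (hs : 0 < s) (r : ℕ) :
    IsPrimitiveRoot (η ^ r) (s / s.gcd r) := by
  have hfin : IsOfFinOrder η := isOfFinOrder_iff_pow_eq_one.mpr ⟨s, hs, hη.pow_eq_one⟩
  rw [hη.eq_orderOf, ← hfin.orderOf_pow]
  exact IsPrimitiveRoot.orderOf _

theorem isPrimitiveRoot_val_pow_of_forall_mem_zpowers {M : Type*} [CommMonoid M]
    [Finite Mˣ] {γ : Mˣ} (hγ : ∀ x : Mˣ, x ∈ Subgroup.zpowers γ) {l s : ℕ}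
    (hls : l * s = Nat.card Mˣ) :
    IsPrimitiveRoot ((γ : M) ^ l) s := by
  have hγ' : IsPrimitiveRoot (γ : M) (orderOf γ) := by
    rw [← orderOf_units]
    exact IsPrimitiveRoot.orderOf _
  exact hγ'.pow (orderOf_pos γ) (by rw [orderOf_eq_card_of_forall_mem_zpowers hγ, hls])

theorem pow_mul_eval_pow_mul_of_pow_eq_one {R : Type*} [CommRing R] (f : R[X]) {r s : ℕ}
    {η : R} (hη : η ^ s = 1) (x : R) :
    (η * x) ^ r * f.eval ((η * x) ^ s) = η ^ r * (x ^ r * f.eval (x ^ s)) := by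
  rw [mul_pow η x s, hη, one_mul, mul_pow, mul_assoc]

theorem image_pow_fin_eq_image_univ {G β : Type*} [Group G] [Fintype G] [DecidableEq β]
    {γ : G} (hγ : ∀ x : G, x ∈ Subgroup.zpowers γ) {l : ℕ} (hl : 0 < l) {Q : G → β}
    (hQ : ∀ x, Q (γ ^ l * x) = Q x) :
    univ.image (fun i : Fin l => Q (γ ^ (i : ℕ))) = univ.image Q := by
  refine Subset.antisymm (image_subset_iff.mpr fun i _ => mem_image_of_mem Q (mem_univ _)) ?_
  have hQpow : ∀ k x, Q (γ ^ (l * k) * x) = Q x := by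
    intro k
    induction k with
    | zero => simp
    | succ k ih => intro x; rw [mul_add_one, pow_add, mul_assoc, ih, hQ]
  intro y hy
  obtain ⟨x, -, rfl⟩ := mem_image.mp hy
  obtain ⟨e, rfl⟩ := (isOfFinOrder_of_finite γ).mem_powers_iff_mem_zpowers.mpr (hγ x)
  refine mem_image.mpr ⟨⟨e % l, Nat.mod_lt e hl⟩, mem_univ _, ?_⟩
  rw [← hQpow (e / l), ← pow_add, Nat.div_add_mod]

theorem card_eq_card_image_pow_mul {F : Type*} [Field F] [DecidableEq F] {ζ : F} {m : ℕ}
    (hζ : IsPrimitiveRoot ζ m) (hm : 0 < m) {A : Finset F} (hA0 : 0 ∉ A)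
    (hζA : ∀ w ∈ A, ζ * w ∈ A) :
    #A = #(A.image (· ^ m)) * m := by
  have : NeZero m := ⟨hm.ne'⟩
  have hpowA : ∀ i, ∀ w ∈ A, ζ ^ i * w ∈ A := by
    intro i
    induction i with
    | zero => simp
    | succ i ih => intro w hw; rw [pow_succ', mul_assoc]; exact hζA _ (ih w hw)
  rw [card_eq_sum_card_image (· ^ m) A]
  refine sum_const_nat fun v hv => ?_
  obtain ⟨w, hw, rfl⟩ := mem_image.mp hv
  have hw0 : w ≠ 0 := ne_of_mem_of_not_mem hw hA0
  have hfiber : {x ∈ A | x ^ m = w ^ m} = (nthRootsFinset m (1 : F)).image (· * w) := by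
    ext x
    simp only [mem_filter, mem_image, mem_nthRootsFinset hm]
    constructor
    · rintro ⟨-, hx⟩
      exact ⟨x / w, by rw [div_pow, hx, div_self (pow_ne_zero _ hw0)], div_mul_cancel₀ x hw0⟩
    · rintro ⟨ω, hω, rfl⟩
      obtain ⟨i, -, rfl⟩ := hζ.eq_pow_of_pow_eq_one hω
      exact ⟨hpowA i w hw, by rw [mul_pow, hω, one_mul]⟩
  rw [hfiber, card_image_of_injective _ (mul_left_injective₀ hw0), hζ.card_nthRootsFinset]

theorem image_pow_erase_zero_image_univ {F : Type*} [Field F] [Fintype F] [DecidableEq F]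
    {P : F → F} (hP0 : P 0 = 0) {m : ℕ} (hm : 0 < m) :
    ((univ.image P).erase 0).image (· ^ m) = (univ.image fun u : Fˣ => P u ^ m).erase 0 := by
  ext y
  simp only [mem_image, mem_erase, mem_univ, true_and]
  constructor
  · rintro ⟨_, ⟨hx0, x, rfl⟩, rfl⟩
    have hx : x ≠ 0 := by rintro rfl; exact hx0 hP0
    exact ⟨pow_ne_zero m hx0, Units.mk0 x hx, rfl⟩
  · rintro ⟨hy, u, rfl⟩
    exact ⟨P u, ⟨fun h => hy (by rw [h, zero_pow hm.ne']), u, rfl⟩, rfl⟩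

/-- (Proposition 2.3 of Mullen–Wan–Wang.) Let `g(x) = a x^r f(x^s) + b` (`a ≠ 0`) over `𝔽_q`
with `s ∣ q-1`, `ℓ = (q-1)/s`, `t = gcd(r,s)`, and let
`c = |{(γ^{ir} f(γ^{si}))^{s/t} : i = 0, …, ℓ-1}|` for a primitive element `γ`. Then
`|V_g| = c·(s/t) + 1` or `|V_g| = (c-1)·(s/t) + 1`. -/
theorem value_set_cyclotomic_proposition
    (F : Type) [Field F] [Fintype F] [DecidableEq F] (q : ℕ) (hq : q = Fintype.card F)
    (γ : Fˣ) (hγ : ∀ x : Fˣ, x ∈ Subgroup.zpowers γ)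
    (a b : F) (ha : a ≠ 0) (r s l t : ℕ) (hr : 0 < r) (hs : 0 < s) (hsd : s ∣ q - 1)
    (hl : l = (q - 1) / s) (ht : t = Nat.gcd r s)
    (f : Polynomial F) (g : F → F) (hg : ∀ x, g x = a * x ^ r * Polynomial.eval (x ^ s) f + b)
    (c : ℕ)
    (hc : c = (Finset.image
        (fun i : Fin l => ((γ : F) ^ ((i : ℕ) * r) * Polynomial.eval ((γ : F) ^ (s * (i : ℕ))) f)
          ^ (s / t)) Finset.univ).card) :
    (Finset.image g Finset.univ).card = c * (s / t) + 1 ∨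
      (Finset.image g Finset.univ).card = (c - 1) * (s / t) + 1 := by
  set P : F → F := fun x => x ^ r * f.eval (x ^ s)
  set m := s / t
  set S := univ.image P
  have hls : l * s = Nat.card Fˣ := by
    rw [Nat.card_eq_fintype_card, Fintype.card_units, ← hq, hl, Nat.div_mul_cancel hsd]
  have hl0 : 0 < l := Nat.pos_of_mul_pos_right (hls ▸ Nat.card_pos)
  have hη := isPrimitiveRoot_val_pow_of_forall_mem_zpowers hγ hls
  have hηr : IsPrimitiveRoot (((γ : F) ^ l) ^ r) m := by
    simpa [m, ht, Nat.gcd_comm] using hη.pow_div_gcd hs r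
  have hm : 0 < m := Nat.div_pos (Nat.le_of_dvd hs (ht ▸ Nat.gcd_dvd_right r s))
    (ht ▸ Nat.gcd_pos_of_pos_right r hs)
  have hPη : ∀ x, P ((γ : F) ^ l * x) = ((γ : F) ^ l) ^ r * P x :=
    pow_mul_eval_pow_mul_of_pow_eq_one f hη.pow_eq_one
  have hP0 : P 0 = 0 := by simp [P, hr.ne']
  have hV : #(univ.image g) = #S := by
    have hgP : g = (fun w => a * w + b) ∘ P := funext fun x => by simp [hg, P, mul_assoc]
    rw [hgP, ← image_image,
      card_image_of_injective _ fun x y h => mul_left_cancel₀ ha (add_right_cancel h)]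
  have hS : #(S.erase 0) = #((S.erase 0).image (· ^ m)) * m := by
    refine card_eq_card_image_pow_mul hηr hm (notMem_erase 0 S) fun w hw => ?_
    obtain ⟨hw0, hwS⟩ := mem_erase.mp hw
    obtain ⟨x, -, rfl⟩ := mem_image.mp hwS
    refine mem_erase.mpr ⟨mul_ne_zero (pow_ne_zero _ (hη.ne_zero hs.ne')) hw0, ?_⟩
    exact hPη x ▸ mem_image_of_mem P (mem_univ _)
  have hD : (univ.image fun u : Fˣ => P u ^ m) = univ.image (fun i : Fin l =>
      ((γ : F) ^ ((i : ℕ) * r) * f.eval ((γ : F) ^ (s * (i : ℕ)))) ^ m) := by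
    rw [← image_pow_fin_eq_image_univ hγ hl0 fun u => ?_]
    · simp [P, pow_mul, mul_comm s]
    · simp only [Units.val_mul, Units.val_pow_eq_pow_val, hPη, mul_pow, hηr.pow_eq_one,
        one_mul]
  rw [hV, ← card_erase_add_one (mem_image_of_mem P (mem_univ 0) : P 0 ∈ S), hP0, hS,
    image_pow_erase_zero_image_univ hP0 hm, hD, card_erase_eq_ite, ← hc]
  split_ifs <;> simp
end

section
/- Let n, ℓ be positive integers and 0 ≤ m_1, …, m_ℓ ≤ n. Let A_1, …, A_ℓ be independent random subsets of {1,…,n} with A_i uniform over all m_i-element subsets, and let Y_n = n − |A_1 ∪ ⋯ ∪ A_ℓ|. Then for every integer k with 0 ≤ k ≤ n, ℙ(Y_n = k) = ∑_{h=k}^{n} (−1)^{h−k} C(h, k) C(n, h) ∏_{j=1}^{ℓ} (n − m_j)_h / (n)_h. -/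
/-!
Let `Y` be the number of points missed by all the `A_j`. Binomial inversion gives
`[Y = k] = ∑_h (-1)^(h-k) C(h,k) C(Y,h)`, so the distribution of `Y` is determined by its binomial
moments `𝔼 C(Y,h)`. Counting pairs `(A, S)` with `S` an `h`-set disjoint from every `A_j` gives
`𝔼 C(Y,h) = C(n,h) ∏_j C(n-h,m_j)/C(n,m_j) = C(n,h) ∏_j (n-m_j)_h/(n)_h`.
-/

open Finset

theorem Nat.choose_mul_choose_sub_comm (n a b : ℕ) :
    n.choose a * (n - a).choose b = n.choose b * (n - b).choose a := by
  have ha := Nat.choose_mul (n := n) (k := a + b) (s := a) (by omega)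
  have hb := Nat.choose_mul (n := n) (k := a + b) (s := b) (by omega)
  rw [Nat.add_sub_cancel_left] at ha
  rw [Nat.add_sub_cancel] at hb
  rw [← ha, ← hb, Nat.choose_symm_add]

theorem Nat.choose_sub_mul_descFactorial (n h m : ℕ) :
    (n - h).choose m * n.descFactorial h = n.choose m * (n - m).descFactorial h := by
  simp only [Nat.descFactorial_eq_factorial_mul_choose]
  linear_combination (h.factorial : ℕ) * Nat.choose_mul_choose_sub_comm n h m

theorem Nat.cast_choose_sub_div_choose {K : Type*} [Field K] [CharZero K] {n h m : ℕ}
    (hh : h ≤ n) (hm : m ≤ n) :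
    ((n - h).choose m : K) / n.choose m = ((n - m).descFactorial h : K) / n.descFactorial h := by
  rw [div_eq_div_iff (by exact_mod_cast (Nat.choose_pos hm).ne')
    (by exact_mod_cast (Nat.descFactorial_pos.2 hh).ne')]
  rw [mul_comm ((n - m).descFactorial h : K)]
  exact_mod_cast Nat.choose_sub_mul_descFactorial n h m

theorem Nat.sum_Icc_neg_one_pow_mul_choose_mul_choose {R : Type*} [CommRing R] {y n : ℕ}
    (hy : y ≤ n) (k : ℕ) :
    ∑ h ∈ Icc k n, (-1 : R) ^ (h - k) * h.choose k * y.choose h = if y = k then 1 else 0 := by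
  have hvanish : ∀ h ∈ Icc k n, h ∉ Icc k y →
      (-1 : R) ^ (h - k) * h.choose k * y.choose h = 0 := by
    intro h hh hhy
    simp only [mem_Icc] at hh hhy
    simp [Nat.choose_eq_zero_of_lt (show y < h by omega)]
  rw [← sum_subset (Icc_subset_Icc_right hy) hvanish, ← Ico_add_one_right_eq_Icc,
    sum_Ico_eq_sum_range]
  have hterm : ∀ i, (-1 : R) ^ (k + i - k) * (k + i).choose k * y.choose (k + i)
      = y.choose k * ((-1) ^ i * (y - k).choose i) := by
    intro i
    have hchoose : (y.choose (k + i) : R) * (k + i).choose k = y.choose k * (y - k).choose i := by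
      have := Nat.choose_mul (n := y) (k := k + i) (s := k) (by omega)
      rw [Nat.add_sub_cancel_left] at this
      simpa only [Nat.cast_mul] using congrArg (Nat.cast : ℕ → R) this
    rw [Nat.add_sub_cancel_left]
    linear_combination (-1 : R) ^ i * hchoose
  simp only [hterm, ← mul_sum]
  rcases lt_or_ge y k with hyk | hky
  · simp [Nat.choose_eq_zero_of_lt hyk, hyk.ne]
  · have halt := congrArg (Int.cast : ℤ → R) (Int.alternating_sum_range_choose (n := y - k))
    push_cast at halt
    rw [show y + 1 - k = y - k + 1 by omega, halt]
    rcases eq_or_ne y k with rfl | hyk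
    · simp
    · simp [hyk, Nat.sub_ne_zero_of_lt (lt_of_le_of_ne hky hyk.symm)]

theorem Finset.natCast_card_filter_eq_alternating_sum_sum_choose {ι R : Type*} [CommRing R]
    (s : Finset ι) (f : ι → ℕ) {n : ℕ} (hf : ∀ i ∈ s, f i ≤ n) (k : ℕ) :
    (#{i ∈ s | f i = k} : R)
      = ∑ h ∈ Icc k n, (-1) ^ (h - k) * h.choose k * ∑ i ∈ s, ((f i).choose h : R) := by
  rw [natCast_card_filter, ← sum_congr rfl fun i hi =>
    Nat.sum_Icc_neg_one_pow_mul_choose_mul_choose (R := R) (hf i hi) k, sum_comm]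
  simp only [mul_sum]

section RandomSubsets

variable {ι α : Type*} [Fintype ι] [DecidableEq ι] [Fintype α] [DecidableEq α]

theorem Fintype.card_subtype_card_eq_disjoint (S : Finset α) (m : ℕ) :
    Fintype.card {B : {B : Finset α // #B = m} // Disjoint S B}
      = (Fintype.card α - #S).choose m := by
  rw [Fintype.card_congr (Equiv.subtypeSubtypeEquivSubtypeInter _ _), Fintype.card_subtype,
    ← card_compl, ← card_powersetCard]
  congr 1
  ext B
  simp [mem_powersetCard, subset_compl_iff_disjoint_left, and_comm]

theorem Fintype.card_pi_subtype_card_eq_disjoint (m : ι → ℕ) (S : Finset α) :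
    Fintype.card {A : ∀ j, {B : Finset α // #B = m j} // ∀ j, Disjoint S (A j)}
      = ∏ j, (Fintype.card α - #S).choose (m j) := by
  rw [Fintype.card_congr (Equiv.subtypePiEquivPi
    (p := fun j (B : {B : Finset α // #B = m j}) => Disjoint S B.1)), Fintype.card_pi]
  simp only [Fintype.card_subtype_card_eq_disjoint]

theorem Finset.card_compl_choose (U : Finset α) (h : ℕ) :
    (#Uᶜ).choose h = #{S ∈ powersetCard h univ | Disjoint S U} := by
  rw [← card_powersetCard]
  congr 1
  ext S
  simp [mem_powersetCard, subset_compl_iff_disjoint_right, and_comm]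

theorem sum_choose_card_compl_biUnion (m : ι → ℕ) (h : ℕ) :
    ∑ A : ∀ j, {B : Finset α // #B = m j}, (#(univ.biUnion fun j => (A j).val)ᶜ).choose h
      = (Fintype.card α).choose h * ∏ j, (Fintype.card α - h).choose (m j) := by
  simp only [card_compl_choose, disjoint_biUnion_right, mem_univ, true_implies, card_filter]
  rw [sum_comm]
  calc _ = ∑ S ∈ powersetCard h univ, ∏ j, (Fintype.card α - h).choose (m j) := by
        refine sum_congr rfl fun S hS => ?_
        rw [← card_filter, ← Fintype.card_subtype, Fintype.card_pi_subtype_card_eq_disjoint,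
          (mem_powersetCard.1 hS).2]
    _ = _ := by rw [sum_const, card_powersetCard, card_univ, smul_eq_mul]

end RandomSubsets

theorem union_random_sets_missing_distribution_general (n l : ℕ)
    (m : Fin l → ℕ) (hm : ∀ j, m j ≤ n) (k : ℕ) :
    (Nat.card {A : (∀ j : Fin l, {B : Finset (Fin n) // B.card = m j}) //
        n - (Finset.univ.biUnion (fun j => (A j).val)).card = k} : ℝ) /
        (∏ j, (n.choose (m j) : ℝ))
      = ∑ h ∈ Finset.Icc k n,
          (-1 : ℝ) ^ (h - k) * (h.choose k : ℝ) * (n.choose h : ℝ) *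
            ∏ j, (((n - m j).descFactorial h : ℕ) : ℝ) / ((n.descFactorial h : ℕ) : ℝ) := by
  have hmissed : ∀ A : (∀ j : Fin l, {B : Finset (Fin n) // #B = m j}),
      n - #(univ.biUnion fun j => (A j).val) = #(univ.biUnion fun j => (A j).val)ᶜ := fun A => by
    rw [card_compl, Fintype.card_fin]
  rw [Nat.card_eq_fintype_card, Fintype.card_subtype,
    natCast_card_filter_eq_alternating_sum_sum_choose _ _ (fun A _ => Nat.sub_le n _), sum_div]
  refine sum_congr rfl fun h hh => ?_
  rw [← Nat.cast_sum]
  simp only [hmissed]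
  rw [sum_choose_card_compl_biUnion, Fintype.card_fin, Nat.cast_mul, Nat.cast_prod,
    prod_congr rfl fun j _ => (Nat.cast_choose_sub_div_choose (mem_Icc.1 hh).2 (hm j)).symm,
    prod_div_distrib]
  ring

/-- The exact distribution of the number `Y_n = n - |A_1 ∪ ⋯ ∪ A_ℓ|` of elements missed by the
union of independent random sets, where `A_i` is uniform over all `m_i`-element subsets of an
`n`-element set: `ℙ(Y_n = k) = ∑_{h=k}^{n} (-1)^{h-k} C(h,k) C(n,h) ∏_{j=1}^{ℓ} (n-m_j)_h/(n)_h`. -/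
theorem union_random_sets_missing_distribution (n l : ℕ) (hn : 0 < n) (hl : 0 < l)
    (m : Fin l → ℕ) (hm : ∀ j, m j ≤ n) (k : ℕ) (hk : k ≤ n) :
    (Nat.card {A : (∀ j : Fin l, {B : Finset (Fin n) // B.card = m j}) //
        n - (Finset.univ.biUnion (fun j => (A j).val)).card = k} : ℝ) /
        (∏ j, (n.choose (m j) : ℝ))
      = ∑ h ∈ Finset.Icc k n,
          (-1 : ℝ) ^ (h - k) * (h.choose k : ℝ) * (n.choose h : ℝ) *
            ∏ j, (((n - m j).descFactorial h : ℕ) : ℝ) / ((n.descFactorial h : ℕ) : ℝ) :=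
  union_random_sets_missing_distribution_general n l m hm k
end

section
/- Let n, ℓ be positive integers and 0 ≤ m_1, …, m_ℓ ≤ n. Let A_1, …, A_ℓ be independent random subsets of {1,…,n} with A_i uniform over all m_i-element subsets, and let X_n = |A_1 ∪ ⋯ ∪ A_ℓ|. Then for every integer i with 0 ≤ i ≤ n, ℙ(X_n = i) = C(n, i) ∑_{h=0}^{i} (−1)^h C(i, h) ∏_{j=1}^{ℓ} C(i − h, m_j) / C(n, m_j). -/
/-!
The number of families with union exactly `S` follows from inclusion–exclusion over the points
of `S` that the union misses: the families whose union avoids a given `t ⊆ S` are those with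
all members inside `S \ t`, and there are `∏ j, C(|S| - |t|, m j)` of them. This count depends
only on `|S| = i`, so summing over the `C(n, i)` sets `S` of size `i` gives the number of
families whose union has size `i`; dividing by the `∏ j, C(n, m j)` families in total gives
the probability.
-/

open Finset

section

variable {α ι : Type*} [Fintype α] [DecidableEq α] [Fintype ι] [DecidableEq ι]

abbrev SizedFamily (α : Type*) (m : ι → ℕ) := ∀ j, {B : Finset α // #B = m j}

variable {m : ι → ℕ}

def familyUnion (A : SizedFamily α m) : Finset α :=
  univ.biUnion fun j => (A j).1

theorem card_filter_familyUnion_subset (S : Finset α) :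
    #{A : SizedFamily α m | familyUnion A ⊆ S} = ∏ j, (#S).choose (m j) := by
  have hpi : ({A | familyUnion A ⊆ S} : Finset (SizedFamily α m))
      = Fintype.piFinset fun j => (S.powersetCard (m j)).subtype (#· = m j) := by
    ext A
    simp [familyUnion, mem_powersetCard, (A _).2]
  rw [hpi, Fintype.card_piFinset]
  refine prod_congr rfl fun j _ => ?_
  rw [card_subtype, filter_true_of_mem fun B hB => (mem_powersetCard.1 hB).2, card_powersetCard]

theorem card_filter_familyUnion_eq (S : Finset α) :
    (#{A : SizedFamily α m | familyUnion A = S} : ℤ)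
      = ∑ h ∈ range (#S + 1), (-1) ^ h * (#S).choose h * ∏ j, ((#S - h).choose (m j) : ℤ) := by
  set missing : α → Finset (SizedFamily α m) := fun x => {A | x ∉ familyUnion A}
  have hcover : (S.inf fun x => (missing x)ᶜ) = ({A | S ⊆ familyUnion A} : Finset _) := by
    ext A
    simp [missing, mem_inf, subset_iff]
  have hmissing : ∀ t ∈ S.powerset, ∑ A ∈ t.inf missing, (if familyUnion A ⊆ S then 1 else 0)
      = ((∏ j, ((#S - #t).choose (m j)) : ℕ) : ℤ) := by
    intro t ht
    rw [sum_boole, ← card_sdiff_of_subset (mem_powerset.1 ht), ← card_filter_familyUnion_subset]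
    congr 2
    ext A
    simp [missing, mem_inf, subset_sdiff, disjoint_right, and_comm]
  have hIE := inclusion_exclusion_sum_inf_compl (G := ℤ) S missing
    (fun A => if familyUnion A ⊆ S then 1 else 0)
  rw [hcover, sum_boole, filter_filter, sum_congr rfl fun t ht => by rw [hmissing t ht],
    sum_powerset_apply_card (fun k => (-1 : ℤ) ^ k • ((∏ j, (#S - k).choose (m j) : ℕ) : ℤ))]
    at hIE
  simp_rw [eq_comm (a := familyUnion _), subset_antisymm_iff, hIE, nsmul_eq_mul, smul_eq_mul]
  push_cast
  exact sum_congr rfl fun h _ => by ring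

theorem card_filter_card_familyUnion_eq (i : ℕ) :
    (#{A : SizedFamily α m | #(familyUnion A) = i} : ℤ)
      = (Fintype.card α).choose i *
          ∑ h ∈ range (i + 1), (-1) ^ h * i.choose h * ∏ j, ((i - h).choose (m j) : ℤ) := by
  rw [card_eq_sum_card_fiberwise (f := familyUnion) (t := powersetCard i univ)
    fun A hA => mem_powersetCard.2 ⟨subset_univ _, (mem_filter.1 hA).2⟩]
  push_cast
  rw [← card_univ, ← card_powersetCard, ← nsmul_eq_mul, ← sum_const]
  refine sum_congr rfl fun S hS => ?_
  rw [← (mem_powersetCard.1 hS).2, ← card_filter_familyUnion_eq, filter_filter]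
  congr 3
  ext A
  exact ⟨And.right, fun h => ⟨h ▸ rfl, h⟩⟩

end

theorem union_random_sets_size_distribution_general (n l : ℕ) (m : Fin l → ℕ) (i : ℕ) :
    (Nat.card {A : (∀ j : Fin l, {B : Finset (Fin n) // B.card = m j}) //
        (Finset.univ.biUnion (fun j => (A j).val)).card = i} : ℝ) /
        (∏ j, (n.choose (m j) : ℝ))
      = (n.choose i : ℝ) *
          ∑ h ∈ Finset.range (i + 1),
            (-1 : ℝ) ^ h * (i.choose h : ℝ) *
              ∏ j, ((i - h).choose (m j) : ℝ) / (n.choose (m j) : ℝ) := by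
  have hcount : (Nat.card {A : (∀ j : Fin l, {B : Finset (Fin n) // B.card = m j}) //
        (Finset.univ.biUnion (fun j => (A j).val)).card = i} : ℝ)
      = n.choose i * ∑ h ∈ range (i + 1),
          (-1) ^ h * i.choose h * ∏ j, ((i - h).choose (m j) : ℝ) := by
    have := card_filter_card_familyUnion_eq (α := Fin n) (m := m) i
    rw [Fintype.card_fin] at this
    rw [Nat.card_eq_fintype_card, Fintype.card_subtype]
    exact_mod_cast this
  rw [hcount, mul_div_assoc, sum_div]
  simp only [prod_div_distrib, mul_div_assoc]

/-- The exact distribution of the size `X_n = |A_1 ∪ ⋯ ∪ A_ℓ|` of the union of independent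
random sets, where `A_i` is uniform over all `m_i`-element subsets of an `n`-element set:
`ℙ(X_n = i) = C(n,i) ∑_{h=0}^{i} (-1)^h C(i,h) ∏_{j=1}^{ℓ} C(i-h,m_j)/C(n,m_j)`. -/
theorem union_random_sets_size_distribution (n l : ℕ) (hn : 0 < n) (hl : 0 < l)
    (m : Fin l → ℕ) (hm : ∀ j, m j ≤ n) (i : ℕ) (hi : i ≤ n) :
    (Nat.card {A : (∀ j : Fin l, {B : Finset (Fin n) // B.card = m j}) //
        (Finset.univ.biUnion (fun j => (A j).val)).card = i} : ℝ) /
        (∏ j, (n.choose (m j) : ℝ))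
      = (n.choose i : ℝ) *
          ∑ h ∈ Finset.range (i + 1),
            (-1 : ℝ) ^ h * (i.choose h : ℝ) *
              ∏ j, ((i - h).choose (m j) : ℝ) / (n.choose (m j) : ℝ) :=
  union_random_sets_size_distribution_general n l m i
end
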